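/- arXiv:2210.04659 — 11 statements merged into one kernel-verified Lean document; each statement's English description precedes it below -/
import Mathlib

section
/- Let n be an even natural number and let j ≡ 2 (mod 4) with gcd(j/2, n/2) = 1. Then the sum over k from 0 to n/2 - 1 of sin((j-1)(2k+1)π/(2n))·sin((j+1)(2k+1)π/(2n)) / [sin²((2k+1)π/(2n))·sin²(j(2k+1)π/(2n))] equals n²/4. -/
/-!
With `n = 2m`, `j = 2c` and `θ = (2k+1)π/(2n)`, the identity
`sin (x - y) * sin (x + y) = sin x ^ 2 - sin y ^ 2` turns each term into
`1 / sin² θ - 1 / sin² (c (2k+1)π/(2m))`. Both sums reduce to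
`∑_{k<N} 1 / sin² (c (2k+1)π/(2N)) = N²` for `c` coprime to `2N`: the first is half of the case
`N = n`, `c = 1` by the symmetry `θ ↦ π - θ`. For `x = c (2k+1)π/(2N)` the number
`ζ = exp (2ix) = ω^(2k+1)`, with `ω` a primitive `2N`-th root of unity, satisfies `ζ^N = -1`, and
`1 / sin² x = -ζ (1 + ζ + ⋯ + ζ^(N-1))²`; summing over `k` kills every power sum except that
of `ζ^N = -1`.
-/

open Real Finset

namespace IsPrimitiveRoot

variable {R : Type*} [CommRing R] [IsDomain R] {ω : R} {N : ℕ}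

theorem pow_half_eq_neg_one (hω : IsPrimitiveRoot ω (2 * N)) (hN : N ≠ 0) : ω ^ N = -1 :=
  eq_neg_one_of_two_right <| by
    simpa [Nat.mul_div_cancel _ (Nat.pos_of_ne_zero hN)] using
      hω.pow_of_dvd hN (dvd_mul_left N 2)

theorem sum_range_pow_odd_mul_eq_zero (hω : IsPrimitiveRoot ω (2 * N)) {e : ℕ}
    (he : ¬ N ∣ e) : ∑ k ∈ range N, ω ^ ((2 * k + 1) * e) = 0 := by
  set ξ := ω ^ (2 * e)
  have hξ : ξ - 1 ≠ 0 := by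
    rw [sub_ne_zero, Ne, hω.pow_eq_one_iff_dvd, Nat.mul_dvd_mul_iff_left two_pos]
    exact he
  have hgeom : (∑ k ∈ range N, ξ ^ k) * (ξ - 1) = 0 := by
    rw [geom_sum_mul, ← pow_mul, mul_right_comm, (hω.pow_eq_one_iff_dvd _).mpr (dvd_mul_right _ _),
      sub_self]
  have hterm : ∀ k, ω ^ ((2 * k + 1) * e) = ω ^ e * ξ ^ k := fun k => by
    rw [← pow_mul, ← pow_add]
    ring_nf
  simp_rw [hterm, ← mul_sum, (mul_eq_zero.mp hgeom).resolve_right hξ, mul_zero]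

theorem sum_range_pow_odd_mul_self (hω : IsPrimitiveRoot ω (2 * N)) :
    ∑ k ∈ range N, ω ^ ((2 * k + 1) * N) = -N := by
  rcases eq_or_ne N 0 with rfl | hN
  · simp
  simp_rw [mul_comm _ N, pow_mul, hω.pow_half_eq_neg_one hN, (odd_two_mul_add_one _).neg_one_pow]
  simp

theorem sum_range_pow_odd_mul (hω : IsPrimitiveRoot ω (2 * N)) {e : ℕ} (he₀ : 0 < e)
    (he : e < 2 * N) :
    ∑ k ∈ range N, ω ^ ((2 * k + 1) * e) = if e = N then -(N : R) else 0 := by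
  split_ifs with h
  · rw [h, hω.sum_range_pow_odd_mul_self]
  · refine hω.sum_range_pow_odd_mul_eq_zero fun ⟨t, ht⟩ => h ?_
    have ht₂ : t < 2 := Nat.lt_of_mul_lt_mul_left (a := N) (by linarith)
    interval_cases t <;> simp_all

theorem sum_range_neg_mul_geom_sum_sq (hω : IsPrimitiveRoot ω (2 * N)) :
    ∑ k ∈ range N, -(ω ^ (2 * k + 1) * (∑ p ∈ range N, (ω ^ (2 * k + 1)) ^ p) ^ 2) =
      (N : R) ^ 2 := by
  have hexpand : ∀ k, ω ^ (2 * k + 1) * (∑ p ∈ range N, (ω ^ (2 * k + 1)) ^ p) ^ 2 =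
      ∑ p ∈ range N, ∑ q ∈ range N, ω ^ ((2 * k + 1) * (p + q + 1)) := fun k => by
    simp_rw [sq, sum_mul_sum, mul_sum, ← pow_mul, ← pow_add]
    ring_nf
  have hinner : ∀ p ∈ range N, ∀ q ∈ range N,
      ∑ k ∈ range N, ω ^ ((2 * k + 1) * (p + q + 1)) = if q = N - 1 - p then -(N : R) else 0 := by
    intro p hp q hq
    rw [mem_range] at hp hq
    rw [hω.sum_range_pow_odd_mul (by omega) (by omega)]
    exact if_congr (by omega) rfl rfl
  calc ∑ k ∈ range N, -(ω ^ (2 * k + 1) * (∑ p ∈ range N, (ω ^ (2 * k + 1)) ^ p) ^ 2)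
      = -∑ p ∈ range N, ∑ q ∈ range N, ∑ k ∈ range N, ω ^ ((2 * k + 1) * (p + q + 1)) := by
        simp_rw [hexpand, sum_neg_distrib]
        rw [sum_comm]
        exact congrArg _ (sum_congr rfl fun p _ => sum_comm)
    _ = (N : R) ^ 2 := by
        rw [sum_congr rfl fun p hp => sum_congr rfl (hinner p hp)]
        simp_rw [sum_ite_eq' (range N) _ (fun _ => -(N : R))]
        rw [sum_congr rfl fun p hp => if_pos (mem_range.mpr (by simp at hp; omega))]
        simp [sq]

end IsPrimitiveRoot

theorem Complex.one_div_sin_sq_eq_neg_mul_geom_sum_sq {x : ℂ} {N : ℕ}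
    (h : exp (2 * x * I) ^ N = -1) :
    1 / sin x ^ 2 = -(exp (2 * x * I) * (∑ p ∈ range N, exp (2 * x * I) ^ p) ^ 2) := by
  set z := exp (2 * x * I)
  have hz₀ : z ≠ 0 := exp_ne_zero _
  have hz₁ : z - 1 ≠ 0 := by
    rw [sub_ne_zero]
    rintro hz
    rw [hz, one_pow] at h
    norm_num at h
  have hgeom : (∑ p ∈ range N, z ^ p) * (z - 1) = -2 := by
    rw [geom_sum_mul, h]
    norm_num
  have hsin : sin x ^ 2 = -(z - 1) ^ 2 / (4 * z) := by
    have hcos : cos (2 * x) = (z + z⁻¹) / 2 := by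
      rw [cos, ← exp_neg, neg_mul]
    rw [sin_sq, cos_sq, hcos]
    field_simp
    ring
  rw [hsin, one_div_div, eq_comm, ← sub_eq_zero]
  field_simp
  linear_combination (-(z * (∑ p ∈ range N, z ^ p) * (z - 1)) + 2 * z) * hgeom

theorem Real.sum_one_div_sin_sq_mul_odd {N c : ℕ} (hc : c.Coprime (2 * N)) :
    ∑ k ∈ range N, 1 / sin (c * (2 * k + 1) * π / (2 * N)) ^ 2 = (N : ℝ) ^ 2 := by
  rcases eq_or_ne N 0 with rfl | hN
  · simp
  have hω : IsPrimitiveRoot (Complex.exp (2 * π * Complex.I / (2 * N : ℕ)) ^ c) (2 * N) :=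
    (Complex.isPrimitiveRoot_exp _ (by omega)).pow_of_coprime c hc
  set ω := Complex.exp (2 * π * Complex.I / (2 * N : ℕ)) ^ c
  have hexp : ∀ k : ℕ, Complex.exp (2 * (c * (2 * k + 1) * π / (2 * N) : ℝ) * Complex.I) =
      ω ^ (2 * k + 1) := fun k => by
    rw [← pow_mul, ← Complex.exp_nat_mul]
    push_cast
    congr 1
    field_simp
  have hroot : ∀ k : ℕ, (ω ^ (2 * k + 1)) ^ N = -1 := fun k => by
    rw [← pow_mul, mul_comm, pow_mul, hω.pow_half_eq_neg_one hN,
      (odd_two_mul_add_one k).neg_one_pow]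
  apply Complex.ofReal_injective
  push_cast [Complex.ofReal_sin]
  rw [← hω.sum_range_neg_mul_geom_sum_sq]
  refine sum_congr rfl fun k _ => ?_
  have h := Complex.one_div_sin_sq_eq_neg_mul_geom_sum_sq (hexp k ▸ hroot k)
  push_cast at h hexp
  rw [h, hexp]

theorem Finset.sum_range_two_mul_of_reflect {M : Type*} [AddCommMonoid M] (f : ℕ → M) (n : ℕ)
    (hf : ∀ k < n, f (2 * n - 1 - k) = f k) :
    ∑ k ∈ range (2 * n), f k = 2 • ∑ k ∈ range n, f k := by
  rw [two_mul, sum_range_add, two_nsmul, ← sum_range_reflect (fun k => f (n + k))]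
  congr 1
  refine sum_congr rfl fun k hk => ?_
  rw [mem_range] at hk
  rw [← hf k hk]
  congr 1
  omega

theorem Real.sum_one_div_sin_sq_odd_div_four {N : ℕ} :
    ∑ k ∈ range N, 1 / sin ((2 * k + 1) * π / (2 * (2 * N))) ^ 2 = 2 * (N : ℝ) ^ 2 := by
  have h := sum_one_div_sin_sq_mul_odd (N := 2 * N) (c := 1) (Nat.coprime_one_left _)
  rw [sum_range_two_mul_of_reflect _ N fun k hk => ?_] at h
  · push_cast at h
    simp only [one_mul, nsmul_eq_mul] at h
    linarith
  · have hN : (N : ℝ) ≠ 0 := by exact_mod_cast (by omega : N ≠ 0)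
    rw [Nat.cast_sub (by omega), Nat.cast_sub (by omega), ← sin_pi_sub]
    push_cast
    congr 3
    field_simp
    ring

theorem Real.sin_sub_mul_sin_add_div {x y : ℝ} (hx : sin x ≠ 0) (hy : sin y ≠ 0) :
    sin (x - y) * sin (x + y) / (sin y ^ 2 * sin x ^ 2) = 1 / sin y ^ 2 - 1 / sin x ^ 2 := by
  have h : sin (x - y) * sin (x + y) = sin x ^ 2 - sin y ^ 2 := by
    rw [sin_sub, sin_add]
    linear_combination sin x ^ 2 * sin_sq_add_cos_sq y - sin y ^ 2 * sin_sq_add_cos_sq x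
  rw [h]
  field_simp

theorem Real.sin_odd_mul_pi_div_ne_zero {a N : ℕ} (ha : Odd a) (hN : N ≠ 0) :
    sin (a * π / (2 * N)) ≠ 0 := by
  rw [Ne, sin_eq_zero_iff]
  rintro ⟨t, ht⟩
  have : (a : ℤ) = 2 * (N * t) := by
    field_simp at ht
    exact_mod_cast (by linarith : (a : ℝ) = 2 * (N * t))
  obtain ⟨r, rfl⟩ := ha
  push_cast at this
  omega

theorem stmt_1 (n j : ℕ) (hn : Even n) (hj : j % 4 = 2)
    (hco : Nat.gcd (j / 2) (n / 2) = 1) :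
    ∑ k ∈ Finset.range (n / 2),
      (Real.sin (((j : ℝ) - 1) * (2 * k + 1) * π / (2 * n)) *
        Real.sin (((j : ℝ) + 1) * (2 * k + 1) * π / (2 * n))) /
        (Real.sin ((2 * k + 1) * π / (2 * n)) ^ 2 *
          Real.sin ((j : ℝ) * (2 * k + 1) * π / (2 * n)) ^ 2)
      = (n : ℝ) ^ 2 / 4 := by
  obtain ⟨m, rfl⟩ := hn.two_dvd
  obtain ⟨c, rfl⟩ : 2 ∣ j := by omega
  have hc : Odd c := Nat.odd_iff.mpr (by omega)
  simp only [Nat.mul_div_cancel_left _ two_pos] at hco ⊢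
  rcases eq_or_ne m 0 with rfl | hm
  · simp
  have hm' : (m : ℝ) ≠ 0 := by exact_mod_cast hm
  calc _ = ∑ k ∈ range m, (1 / sin ((2 * k + 1) * π / (2 * (2 * m))) ^ 2 -
        1 / sin (c * (2 * k + 1) * π / (2 * m)) ^ 2) := sum_congr rfl fun k _ => by
        have hx := sin_odd_mul_pi_div_ne_zero (hc.mul (odd_two_mul_add_one k)) hm
        have hy := sin_odd_mul_pi_div_ne_zero (N := 2 * m) (odd_two_mul_add_one k) (by omega)
        push_cast at hx hy
        rw [← sin_sub_mul_sin_add_div hx hy]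
        push_cast
        congr 3 <;> field_simp
    _ = _ := by
        rw [sum_sub_distrib, sum_one_div_sin_sq_odd_div_four,
          sum_one_div_sin_sq_mul_odd (Nat.Coprime.mul_right (Nat.coprime_two_right.mpr hc) hco)]
        push_cast
        ring
end

section
/- Let n be an odd natural number, n ≥ 3. Then the sum over k from 0 to (n-3)/2 of sin((2k+1)π/(2n))·sin(3(2k+1)π/(2n)) / [sin²((2k+1)π/(2n))·sin²((2k+1)π/n)] equals (n² - 1)/3. -/
/-!
Put `θₖ = (2k+1)π/(2n)`. Since `sin 3θ = sin θ (4 cos² θ - 1)`, the `k`-th summand is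
`csc² θₖ - csc² 2θₖ`. Both resulting sums reduce to the classical identity
`∑_{j=1}^{N-1} csc² (jπ/N) = (N² - 1)/3`: the odd multiples of `π/(2n)` contribute
`(4n² - 1)/3 - (n² - 1)/3 = n²` (take `N = 2n` and `N = n`), and for odd `n` the symmetry
`x ↦ π - x` halves the relevant sums, leaving `(n² - 1)/2 - (n² - 1)/6 = (n² - 1)/3`.

The classical identity comes from the roots of unity `ω = e^{2πij/N}`: for `ω ≠ 1`,
`(1 - ω) ∑ₖ k ωᵏ = -N` and `(1 - ω)(1 - ω⁻¹) = 4 sin² (jπ/N)`, so `csc² (jπ/N)` is `4/N²` times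
`|∑ₖ k ωᵏ|²`, and Parseval's identity for the discrete Fourier transform sums these to
`N ∑ k² - (∑ k)²` over `j ≠ 0`.
-/

open Real Finset

theorem sum_range_cast_mul_two {R : Type*} [CommRing R] (N : ℕ) :
    (∑ k ∈ range N, (k : R)) * 2 = N * (N - 1) := by
  induction N with
  | zero => simp
  | succ n ih => rw [sum_range_succ, add_mul, ih]; push_cast; ring

theorem sum_range_cast_sq_mul_six {R : Type*} [CommRing R] (N : ℕ) :
    (∑ k ∈ range N, (k : R) ^ 2) * 6 = N * (N - 1) * (2 * N - 1) := by
  induction N with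
  | zero => simp
  | succ n ih => rw [sum_range_succ, add_mul, ih]; push_cast; ring

theorem sum_range_two_mul_eq_even_add_odd {M : Type*} [AddCommMonoid M] (f : ℕ → M) (n : ℕ) :
    ∑ j ∈ range (2 * n), f j = ∑ k ∈ range n, f (2 * k) + ∑ k ∈ range n, f (2 * k + 1) := by
  induction n with
  | zero => simp
  | succ n ih =>
    rw [mul_add_one, sum_range_succ, sum_range_succ, ih, sum_range_succ, sum_range_succ]
    abel

theorem one_sub_mul_sum_range_mul_pow {R : Type*} [CommRing R] (w : R) (N : ℕ) :
    (1 - w) * ∑ k ∈ range N, (k : R) * w ^ k = ∑ k ∈ range N, w ^ k - 1 - (N - 1) * w ^ N := by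
  induction N with
  | zero => simp
  | succ n ih => rw [sum_range_succ, sum_range_succ, mul_add, ih]; push_cast; ring

section Domain

variable {R : Type*} [CommRing R] [IsDomain R] {N : ℕ}

theorem geom_sum_eq_zero_of_pow_eq_one {x : R} (hxN : x ^ N = 1) (hx : x ≠ 1) :
    ∑ i ∈ range N, x ^ i = 0 := by
  have h := geom_sum_mul x N
  rw [hxN, sub_self] at h
  exact (mul_eq_zero.1 h).resolve_right (sub_ne_zero.2 hx)

theorem one_sub_mul_sum_range_mul_pow_of_pow_eq_one {w : R} (hwN : w ^ N = 1) (hw : w ≠ 1) :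
    (1 - w) * ∑ k ∈ range N, (k : R) * w ^ k = -N := by
  rw [one_sub_mul_sum_range_mul_pow, geom_sum_eq_zero_of_pow_eq_one hwN hw, hwN]
  ring

end Domain

namespace IsPrimitiveRoot

variable {K : Type*} [Field K] {ζ : K} {N : ℕ}

theorem geom_sum_pow_mul_inv_pow (hζ : IsPrimitiveRoot ζ N) {k l : ℕ} (hk : k < N)
    (hl : l < N) : ∑ j ∈ range N, (ζ ^ k * ζ⁻¹ ^ l) ^ j = if k = l then (N : K) else 0 := by
  have hζ0 : ζ ≠ 0 := hζ.ne_zero (by omega)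
  split_ifs with hkl
  · simp [hkl, mul_inv_cancel₀ (pow_ne_zero l hζ0)]
  · refine geom_sum_eq_zero_of_pow_eq_one ?_ fun h ↦ hkl (hζ.pow_inj hk hl ?_)
    · rw [mul_pow, ← pow_mul, ← pow_mul, mul_comm k, mul_comm l, pow_mul, pow_mul, inv_pow,
        hζ.pow_eq_one]
      simp
    · rwa [inv_pow, mul_inv_eq_one₀ (pow_ne_zero _ hζ0)] at h

theorem sum_range_mul_sum_range_inv (hζ : IsPrimitiveRoot ζ N) (a b : ℕ → K) :
    ∑ j ∈ range N, (∑ k ∈ range N, a k * (ζ ^ j) ^ k) * ∑ l ∈ range N, b l * (ζ⁻¹ ^ j) ^ l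
      = N * ∑ k ∈ range N, a k * b k := by
  calc _ = ∑ k ∈ range N, ∑ l ∈ range N,
        a k * b l * ∑ j ∈ range N, (ζ ^ k * ζ⁻¹ ^ l) ^ j := by
        simp_rw [sum_mul_sum, mul_sum]
        rw [sum_comm]
        refine sum_congr rfl fun k _ ↦ ?_
        rw [sum_comm]
        refine sum_congr rfl fun l _ ↦ sum_congr rfl fun j _ ↦ ?_
        rw [mul_pow, ← pow_mul, ← pow_mul, ← pow_mul, ← pow_mul, mul_comm j k, mul_comm j l]
        ring
    _ = ∑ k ∈ range N, ∑ l ∈ range N, if k = l then a k * b l * N else 0 := by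
        refine sum_congr rfl fun k hk ↦ sum_congr rfl fun l hl ↦ ?_
        rw [hζ.geom_sum_pow_mul_inv_pow (mem_range.1 hk) (mem_range.1 hl), mul_ite, mul_zero]
    _ = N * ∑ k ∈ range N, a k * b k := by
        simp only [sum_ite_eq, mem_range, mul_sum]
        exact sum_congr rfl fun k hk ↦ by simp [mem_range.1 hk, mul_comm]

end IsPrimitiveRoot

theorem one_sub_mul_one_sub_inv_mul_sum_range_mul_pow {K : Type*} [Field K] {ω : K} {N : ℕ}
    (hωN : ω ^ N = 1) (hω : ω ≠ 1) :
    (1 - ω) * (1 - ω⁻¹) *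
      ((∑ k ∈ range N, (k : K) * ω ^ k) * ∑ k ∈ range N, (k : K) * ω⁻¹ ^ k) = N ^ 2 := by
  have h := one_sub_mul_sum_range_mul_pow_of_pow_eq_one hωN hω
  have h' := one_sub_mul_sum_range_mul_pow_of_pow_eq_one (w := ω⁻¹)
    (by rw [inv_pow, hωN, inv_one]) (inv_ne_one.2 hω)
  linear_combination (1 - ω⁻¹) * (∑ k ∈ range N, (k : K) * ω⁻¹ ^ k) * h - N * h'

theorem Complex.one_sub_exp_mul_one_sub_inv_exp (θ : ℝ) :
    (1 - Complex.exp (2 * θ * Complex.I)) * (1 - (Complex.exp (2 * θ * Complex.I))⁻¹)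
      = 4 * Real.sin θ ^ 2 := by
  have hprod : Complex.exp (2 * θ * Complex.I) * Complex.exp (-(2 * θ) * Complex.I) = 1 := by
    rw [← Complex.exp_add]; ring_nf; exact Complex.exp_zero
  rw [← Complex.exp_neg, ← neg_mul, Complex.ofReal_sin]
  linear_combination hprod + Complex.two_cos (2 * θ) - 2 * Complex.cos_two_mul_eq_one_sub (θ : ℂ)

theorem ofReal_inv_sin_sq_mul_pi_div_mul_sq {N j : ℕ} (hj0 : j ≠ 0) (hjN : j < N) :
    (((sin (j * π / N) ^ 2)⁻¹ : ℝ) : ℂ) * N ^ 2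
      = 4 * ((∑ k ∈ range N, (k : ℂ) * (Complex.exp (2 * π * Complex.I / N) ^ j) ^ k) *
        ∑ k ∈ range N, (k : ℂ) * ((Complex.exp (2 * π * Complex.I / N))⁻¹ ^ j) ^ k) := by
  set ζ := Complex.exp (2 * π * Complex.I / N)
  have hζ : IsPrimitiveRoot ζ N := Complex.isPrimitiveRoot_exp N (by omega)
  have h := one_sub_mul_one_sub_inv_mul_sum_range_mul_pow
    (by rw [← pow_mul, mul_comm, pow_mul, hζ.pow_eq_one, one_pow])
    (hζ.pow_ne_one_of_pos_of_lt hj0 hjN)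
  have hζj : ζ ^ j = Complex.exp (2 * (j * π / N : ℝ) * Complex.I) := by
    rw [← Complex.exp_nat_mul]; push_cast; ring_nf
  rw [hζj, Complex.one_sub_exp_mul_one_sub_inv_exp, ← hζj, ← inv_pow] at h
  have hs : (sin (j * π / N) : ℂ) ^ 2 ≠ 0 := by
    rintro hs
    rw [hs, mul_zero, zero_mul] at h
    exact pow_ne_zero 2 (Nat.cast_ne_zero.2 (by omega)) h.symm
  rw [← h, Complex.ofReal_inv, Complex.ofReal_pow, mul_comm 4, mul_assoc,
    inv_mul_cancel_left₀ hs]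

-- The `j = 0` summand is `(sin 0 ^ 2)⁻¹ = 0`.
theorem sum_range_inv_sin_sq_mul_pi_div {N : ℕ} (hN : N ≠ 0) :
    ∑ j ∈ range N, (sin (j * π / N) ^ 2)⁻¹ = ((N : ℝ) ^ 2 - 1) / 3 := by
  set ζ := Complex.exp (2 * π * Complex.I / N)
  have hζ : IsPrimitiveRoot ζ N := Complex.isPrimitiveRoot_exp N hN
  have hN0 : (N : ℂ) ≠ 0 := Nat.cast_ne_zero.2 hN
  have hsum : ((∑ j ∈ Ico 1 N, (sin (j * π / N) ^ 2)⁻¹ : ℝ) : ℂ) * N ^ 2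
      = 4 * ∑ j ∈ Ico 1 N,
        (∑ k ∈ range N, (k : ℂ) * (ζ ^ j) ^ k) * ∑ k ∈ range N, (k : ℂ) * (ζ⁻¹ ^ j) ^ k := by
    rw [Complex.ofReal_sum, sum_mul, mul_sum]
    exact sum_congr rfl fun j hj ↦
      ofReal_inv_sin_sq_mul_pi_div_mul_sq (Nat.one_le_iff_ne_zero.1 (mem_Ico.1 hj).1)
        (mem_Ico.1 hj).2
  have hparseval := hζ.sum_range_mul_sum_range_inv (fun k ↦ (k : ℂ)) (fun k ↦ (k : ℂ))
  rw [sum_range_eq_add_Ico _ (Nat.pos_of_ne_zero hN)] at hparseval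
  simp only [pow_zero, one_pow, mul_one, ← sq] at hparseval
  have hsum_id := sum_range_cast_mul_two (R := ℂ) N
  have hsum_sq := sum_range_cast_sq_mul_six (R := ℂ) N
  rw [sum_range_eq_add_Ico _ (Nat.pos_of_ne_zero hN)]
  simp only [CharP.cast_eq_zero, zero_mul, zero_div, sin_zero, ne_eq, OfNat.ofNat_ne_zero,
    not_false_eq_true, zero_pow, inv_zero, zero_add]
  apply Complex.ofReal_injective
  apply mul_right_cancel₀ (pow_ne_zero 2 hN0)
  rw [hsum]
  push_cast
  linear_combination 4 * hparseval + 2 * (N : ℂ) / 3 * hsum_sq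
    - (2 * ∑ k ∈ range N, (k : ℂ) + N * (N - 1)) * hsum_id

theorem sin_mul_pi_div_eq_of_add_eq {a b c : ℝ} (h : a + b = c) (hc : c ≠ 0) :
    sin (a * π / c) = sin (b * π / c) := by
  rw [← sin_pi_sub]
  congr 1
  field_simp
  linarith

theorem sum_range_inv_sin_sq_odd_mul_pi_div_two_mul {n : ℕ} (hn : n ≠ 0) :
    ∑ k ∈ range n, (sin ((2 * k + 1) * π / (2 * n)) ^ 2)⁻¹ = (n : ℝ) ^ 2 := by
  have h2n := sum_range_inv_sin_sq_mul_pi_div (N := 2 * n) (by omega)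
  have heven : ∀ k : ℕ, ((2 * k : ℕ) : ℝ) * π / ((2 * n : ℕ) : ℝ) = k * π / n := by
    intro k; push_cast; field_simp
  rw [sum_range_two_mul_eq_even_add_odd, sum_congr rfl fun k _ ↦ by rw [heven k],
    sum_range_inv_sin_sq_mul_pi_div hn] at h2n
  push_cast at h2n
  linarith

theorem sum_range_half_inv_sin_sq_odd_mul_pi_div_two_mul {n m : ℕ} (h : n = 2 * m + 1) :
    ∑ k ∈ range m, (sin ((2 * k + 1) * π / (2 * n)) ^ 2)⁻¹ = ((n : ℝ) ^ 2 - 1) / 2 := by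
  subst h
  set g : ℕ → ℝ := fun k ↦ (sin ((2 * k + 1) * π / (2 * (2 * m + 1 : ℕ))) ^ 2)⁻¹
  have hfull : ∑ k ∈ range (2 * m + 1), g k = ((2 * m + 1 : ℕ) : ℝ) ^ 2 :=
    sum_range_inv_sin_sq_odd_mul_pi_div_two_mul (by omega)
  have hmid : g m = 1 := by
    simp only [g]
    rw [show (2 * m + 1 : ℝ) * π / (2 * (2 * m + 1 : ℕ)) = π / 2 by push_cast; field_simp]
    simp
  have hrefl : ∀ i ∈ range m, g (m + 1 + i) = g (m - 1 - i) := by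
    intro i hi
    have hi := mem_range.1 hi
    simp only [g]
    rw [sin_mul_pi_div_eq_of_add_eq (b := 2 * ((m - 1 - i : ℕ) : ℝ) + 1) _ (by positivity)]
    push_cast [Nat.sub_sub, Nat.cast_sub (show 1 + i ≤ m by omega)]
    ring
  rw [show range (2 * m + 1) = range (m + 1 + m) by ring_nf, sum_range_add, sum_range_succ,
    sum_congr rfl hrefl, sum_range_reflect g m, hmid] at hfull
  linarith

theorem sum_range_half_inv_sin_sq_odd_mul_pi_div {n m : ℕ} (h : n = 2 * m + 1) :
    ∑ k ∈ range m, (sin ((2 * k + 1) * π / n) ^ 2)⁻¹ = ((n : ℝ) ^ 2 - 1) / 6 := by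
  subst h
  set f : ℕ → ℝ := fun j ↦ (sin (j * π / (2 * m + 1 : ℕ)) ^ 2)⁻¹
  have hfull := sum_range_inv_sin_sq_mul_pi_div (N := 2 * m + 1) (by omega)
  have hrefl : ∀ k ∈ range m, f (2 * k + 1 + 1) = f (2 * (m - 1 - k) + 1) := by
    intro k hk
    have hk := mem_range.1 hk
    simp only [f]
    rw [sin_mul_pi_div_eq_of_add_eq (b := ((2 * (m - 1 - k) + 1 : ℕ) : ℝ)) _ (by positivity)]
    push_cast [Nat.sub_sub, Nat.cast_sub (show 1 + k ≤ m by omega)]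
    ring
  rw [sum_range_succ', sum_range_two_mul_eq_even_add_odd, sum_congr rfl hrefl,
    sum_range_reflect (fun k ↦ f (2 * k + 1)) m] at hfull
  simp only [f, CharP.cast_eq_zero, zero_mul, zero_div, sin_zero, ne_eq, OfNat.ofNat_ne_zero,
    not_false_eq_true, zero_pow, inv_zero, add_zero] at hfull
  push_cast at hfull ⊢
  linarith

theorem sin_mul_sin_three_mul_div_eq {θ : ℝ} (h : sin (2 * θ) ≠ 0) :
    sin θ * sin (3 * θ) / (sin θ ^ 2 * sin (2 * θ) ^ 2) = (sin θ ^ 2)⁻¹ - (sin (2 * θ) ^ 2)⁻¹ := by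
  rw [sin_two_mul] at h ⊢
  have hs : sin θ ≠ 0 := by rintro hs; simp [hs] at h
  have hc : cos θ ≠ 0 := by rintro hc; simp [hc] at h
  rw [sin_three_mul]
  field_simp
  linear_combination -4 * sin_sq_add_cos_sq θ

theorem stmt_2_general (n : ℕ) (hn : Odd n) :
    ∑ k ∈ Finset.range ((n - 1) / 2),
      (Real.sin ((2 * k + 1) * π / (2 * n)) *
        Real.sin (3 * (2 * k + 1) * π / (2 * n))) /
        (Real.sin ((2 * k + 1) * π / (2 * n)) ^ 2 *
          Real.sin ((2 * k + 1) * π / n) ^ 2)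
      = ((n : ℝ) ^ 2 - 1) / 3 := by
  obtain ⟨m, hm⟩ := hn
  have hsummand : ∀ k ∈ range m,
      sin ((2 * k + 1) * π / (2 * n)) * sin (3 * (2 * k + 1) * π / (2 * n)) /
        (sin ((2 * k + 1) * π / (2 * n)) ^ 2 * sin ((2 * k + 1) * π / n) ^ 2)
      = (sin ((2 * k + 1) * π / (2 * n)) ^ 2)⁻¹ - (sin ((2 * k + 1) * π / n) ^ 2)⁻¹ := by
    intro k hk
    have hkn : (2 * k + 1 : ℝ) < n := by
      have := mem_range.1 hk; rw [hm]; exact_mod_cast (by omega : 2 * k + 1 < 2 * m + 1)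
    have hn0 : (0 : ℝ) < n := by linarith
    have h2θ : (2 * k + 1) * π / n = 2 * ((2 * k + 1) * π / (2 * n)) := by ring
    rw [show 3 * (2 * k + 1) * π / (2 * n) = 3 * ((2 * k + 1) * π / (2 * n)) by ring, h2θ]
    refine sin_mul_sin_three_mul_div_eq (sin_pos_of_pos_of_lt_pi ?_ ?_).ne'
    · positivity
    · rw [← h2θ, div_lt_iff₀ hn0]; nlinarith [pi_pos]
  rw [show (n - 1) / 2 = m by omega, sum_congr rfl hsummand, sum_sub_distrib,
    sum_range_half_inv_sin_sq_odd_mul_pi_div_two_mul hm,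
    sum_range_half_inv_sin_sq_odd_mul_pi_div hm]
  ring

theorem stmt_2 (n : ℕ) (hn : Odd n) (h3 : 3 ≤ n) :
    ∑ k ∈ Finset.range ((n - 1) / 2),
      (Real.sin ((2 * k + 1) * π / (2 * n)) *
        Real.sin (3 * (2 * k + 1) * π / (2 * n))) /
        (Real.sin ((2 * k + 1) * π / (2 * n)) ^ 2 *
          Real.sin ((2 * k + 1) * π / n) ^ 2)
      = ((n : ℝ) ^ 2 - 1) / 3 :=
  stmt_2_general n hn
end

section
/- The limit as k → ∞ of the sum over j from 0 to 2k-1 of (-1)^j · sin²((2j+1)π/(8k+2)) equals -1/2. -/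
/-!
Writing `sin² = (1 - cos 2·)/2`, the sum becomes `-1/2` times an alternating sum of
`cos ((2j+1)α)` with `α = π/(4k+1)`, since the `2k` alternating constants cancel. Multiplying
by `2 cos α` and using `2 cos a cos α = cos (a + α) + cos (a - α)`, that sum telescopes to
`1 - cos (4kα) = 1 + cos α`. Hence the sum equals `-(1 + cos α)/(4 cos α)`, which tends to
`-1/2` as `α → 0`.
-/

open Real Finset Filter Topology

lemma two_mul_cos_mul_sum_neg_one_pow_mul_cos (x : ℝ) (n : ℕ) :
    2 * cos x * ∑ j ∈ range n, (-1 : ℝ) ^ j * cos ((2 * j + 1) * x)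
      = 1 + (-1) ^ (n + 1) * cos (2 * n * x) := by
  induction n with
  | zero => simp
  | succ n ih =>
    have h : cos (2 * ((n : ℝ) + 1) * x) + cos (2 * n * x)
        = 2 * cos ((2 * n + 1) * x) * cos x := by
      rw [cos_add_cos]
      ring_nf
    rw [sum_range_succ, mul_add, ih]
    push_cast
    linear_combination (-((-1 : ℝ) ^ n)) * h

lemma four_mul_cos_mul_sum_neg_one_pow_mul_sin_sq (x : ℝ) (n : ℕ) :
    4 * cos (2 * x) * ∑ j ∈ range (2 * n), (-1 : ℝ) ^ j * sin ((2 * j + 1) * x) ^ 2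
      = cos (8 * n * x) - 1 := by
  have h_half_angle : ∀ j : ℕ, (-1 : ℝ) ^ j * sin ((2 * j + 1) * x) ^ 2
      = (-1 : ℝ) ^ j / 2 - (-1 : ℝ) ^ j * cos ((2 * j + 1) * (2 * x)) / 2 := fun j => by
    rw [sin_sq_eq_half_sub]
    ring_nf
  have h_signs : ∑ j ∈ range (2 * n), (-1 : ℝ) ^ j = 0 := by
    simp [neg_one_geom_sum]
  have h_tele := two_mul_cos_mul_sum_neg_one_pow_mul_cos (2 * x) (2 * n)
  rw [pow_succ, pow_mul, neg_one_sq, one_pow, Nat.cast_mul, Nat.cast_two,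
    show 2 * (2 * (n : ℝ)) * (2 * x) = 8 * n * x by ring] at h_tele
  simp only [h_half_angle, sum_sub_distrib, ← sum_div, h_signs]
  linear_combination -h_tele

theorem stmt_5 :
    Filter.Tendsto
      (fun k : ℕ => ∑ j ∈ Finset.range (2 * k),
        (-1 : ℝ) ^ j * Real.sin ((2 * j + 1) * π / (8 * k + 2)) ^ 2)
      Filter.atTop (nhds (-1 / 2)) := by
  set x : ℕ → ℝ := fun k => π / (8 * k + 2)
  have hx : Tendsto x atTop (𝓝 0) :=
    tendsto_const_nhds.div_atTop <| tendsto_atTop_add_const_right _ _ <|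
      tendsto_natCast_atTop_atTop.const_mul_atTop (by norm_num)
  have hcos : Tendsto (fun k => cos (2 * x k)) atTop (𝓝 1) := by
    simpa [Function.comp_def] using
      ((continuous_cos.comp (continuous_const_mul 2)).tendsto 0).comp hx
  have hlim : Tendsto (fun k => -(1 + cos (2 * x k)) / (4 * cos (2 * x k))) atTop
      (𝓝 (-1 / 2)) := by
    convert ((tendsto_const_nhds (x := (1 : ℝ)).add hcos).neg).div
      (tendsto_const_nhds (x := (4 : ℝ)).mul hcos) (by norm_num) using 2 <;> norm_num
  refine hlim.congr' ?_
  filter_upwards [hcos.eventually_ne one_ne_zero] with k hk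
  have h_angle : 8 * k * x k = π - 2 * x k := by
    simp only [x]
    field_simp
    ring
  have h := four_mul_cos_mul_sum_neg_one_pow_mul_sin_sq (x k) k
  rw [h_angle, cos_pi_sub] at h
  simp only [mul_div_assoc]
  rw [div_eq_iff (mul_ne_zero four_ne_zero hk)]
  linear_combination -h
end

section
/- The limit as k → ∞ of the sum over j from 0 to 2k of (-1)^j · sin²((2j+1)π/(8k+6)) equals 1/2. -/
open Real Finset Filter

private lemma telescope (u : ℕ → ℝ) (k : ℕ) :
    ∑ j ∈ Finset.range (2 * k + 1), (-1 : ℝ) ^ j * (u (j + 1) + u j)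
      = u 0 + u (2 * k + 1) := by
  induction k with
  | zero => simp [add_comm]
  | succ k ih =>
    rw [show 2 * (k + 1) + 1 = (2 * k + 1) + 1 + 1 from by ring, Finset.sum_range_succ,
      Finset.sum_range_succ, ih,
      show ((-1 : ℝ)) ^ (2 * k + 1) = -1 from by simp [pow_succ, pow_mul],
      show ((-1 : ℝ)) ^ (2 * k + 1 + 1) = 1 from by simp [pow_succ, pow_mul]]
    ring_nf

private lemma key (k : ℕ) :
    ∑ j ∈ Finset.range (2 * k + 1),
        (-1 : ℝ) ^ j * Real.sin ((2 * j + 1) * π / (8 * k + 6)) ^ 2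
      = 1 / 2 - (1 - Real.cos (2 * π / (8 * k + 6))) / (4 * Real.cos (2 * π / (8 * k + 6))) := by
  set n : ℝ := (8 * k + 6 : ℝ) with hn
  have hn0 : n ≠ 0 := by positivity
  set c : ℝ := 2 * π / n with hc
  have hcpos : 0 < Real.cos c := by
    apply Real.cos_pos_of_mem_Ioo
    constructor
    · have : 0 < c := by positivity
      linarith [Real.pi_pos]
    · have hle : c ≤ π / 3 := by
        rw [hc, div_le_div_iff₀ (by positivity) (by norm_num)]
        nlinarith [Real.pi_pos, Nat.cast_nonneg (α := ℝ) ]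
      linarith [Real.pi_pos]
  have hS : (∑ j ∈ Finset.range (2 * k + 1), (-1 : ℝ) ^ j * Real.cos ((4 * j + 2) * π / n))
      * (2 * Real.cos c) = 1 - Real.cos c := by
    rw [Finset.sum_mul]
    have hterm : ∀ j ∈ Finset.range (2 * k + 1),
        (-1 : ℝ) ^ j * Real.cos ((4 * j + 2) * π / n) * (2 * Real.cos c)
          = (-1 : ℝ) ^ j * (Real.cos (4 * (j + 1) * π / n) + Real.cos (4 * j * π / n)) := by
      intro j _
      rw [Real.cos_add_cos]
      rw [show (4 * ((j : ℝ) + 1) * π / n + 4 * j * π / n) / 2 = (4 * j + 2) * π / n from by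
        field_simp; ring]
      rw [show (4 * ((j : ℝ) + 1) * π / n - 4 * j * π / n) / 2 = c from by
        rw [hc]; field_simp; ring]
      ring
    rw [Finset.sum_congr rfl hterm]
    have htel := telescope (fun j => Real.cos (4 * (j : ℝ) * π / n)) k
    push_cast at htel
    rw [htel, show (4 : ℝ) * 0 * π / n = 0 from by ring, Real.cos_zero,
      show 4 * (2 * (k : ℝ) + 1) * π / n = π - c from by
        rw [hc, hn]; field_simp; ring,
      Real.cos_pi_sub]
    ring
  have hsin : ∀ j ∈ Finset.range (2 * k + 1),
      (-1 : ℝ) ^ j * Real.sin ((2 * j + 1) * π / (8 * k + 6)) ^ 2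
        = (-1 : ℝ) ^ j * (1 / 2) - (-1 : ℝ) ^ j * Real.cos ((4 * j + 2) * π / n) / 2 := by
    intro j _
    rw [Real.sin_sq_eq_half_sub]
    rw [show 2 * ((2 * (j : ℝ) + 1) * π / (8 * k + 6)) = (4 * j + 2) * π / n from by
      rw [hn]; ring]
    ring
  have hcne : Real.cos c ≠ 0 := ne_of_gt hcpos
  have hSval : (∑ j ∈ Finset.range (2 * k + 1), (-1 : ℝ) ^ j * Real.cos ((4 * j + 2) * π / n))
      = (1 - Real.cos c) / (2 * Real.cos c) := by
    field_simp at hS ⊢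
    simp only [mul_comm π] at ⊢
    linarith [hS]
  rw [Finset.sum_congr rfl hsin, Finset.sum_sub_distrib, ← Finset.sum_mul, ← Finset.sum_div,
    neg_one_geom_sum, if_neg (by simp [Nat.even_add_one, parity_simps]), hSval]
  field_simp
  ring

theorem stmt_6 :
    Filter.Tendsto
      (fun k : ℕ => ∑ j ∈ Finset.range (2 * k + 1),
        (-1 : ℝ) ^ j * Real.sin ((2 * j + 1) * π / (8 * k + 6)) ^ 2)
      Filter.atTop (nhds (1 / 2)) := by
  have hfun : (fun k : ℕ => ∑ j ∈ Finset.range (2 * k + 1),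
        (-1 : ℝ) ^ j * Real.sin ((2 * j + 1) * π / (8 * k + 6)) ^ 2)
      = fun k : ℕ => 1 / 2 - (1 - Real.cos (2 * π / (8 * k + 6)))
          / (4 * Real.cos (2 * π / (8 * k + 6))) := funext key
  rw [hfun]
  have hc0 : Tendsto (fun k : ℕ => 2 * π / (8 * (k : ℝ) + 6)) atTop (nhds 0) := by
    apply Tendsto.div_atTop tendsto_const_nhds
    apply tendsto_atTop_add_const_right
    exact (tendsto_natCast_atTop_atTop (R := ℝ)).const_mul_atTop (by norm_num)
  have hcos : Tendsto (fun k : ℕ => Real.cos (2 * π / (8 * (k : ℝ) + 6))) atTop (nhds 1) := by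
    have := (Real.continuous_cos.tendsto 0).comp hc0
    simpa [Function.comp_def] using this
  have : Tendsto (fun k : ℕ => 1 / 2 - (1 - Real.cos (2 * π / (8 * (k : ℝ) + 6)))
      / (4 * Real.cos (2 * π / (8 * (k : ℝ) + 6)))) atTop (nhds (1 / 2 - (1 - 1) / (4 * 1))) := by
    exact tendsto_const_nhds.sub ((tendsto_const_nhds.sub hcos).div
      (tendsto_const_nhds.mul hcos) (by norm_num))
  simpa using this
end

section
/- sin(2π/15)/sin(π/15) - sin(7π/15)/sin(4π/15) - sin(3π/15)/sin(6π/15) = 0. -/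
/-! Each quotient is `sin (2x) / sin x = 2 cos x`, after `sin (π - y) = sin y` where needed, so the
claim becomes `cos (π/15) - cos (4π/15) = cos (6π/15)`; by sum-to-product both sides equal
`sin (π/10)`. -/

open Real

lemma sin_two_mul_div_sin {x : ℝ} (hx : sin x ≠ 0) : sin (2 * x) / sin x = 2 * cos x := by
  rw [sin_two_mul]
  field_simp

lemma sin_pi_sub_two_mul_div_sin {x : ℝ} (hx : sin x ≠ 0) :
    sin (π - 2 * x) / sin x = 2 * cos x := by
  rw [sin_pi_sub, sin_two_mul_div_sin hx]

lemma sin_mul_pi_div_fifteen_ne_zero {k : ℝ} (hk₀ : 0 < k) (hk : k < 15) :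
    sin (k * π / 15) ≠ 0 :=
  (sin_pos_of_pos_of_lt_pi (by positivity) (by nlinarith [pi_pos])).ne'

lemma cos_pi_div_fifteen_sub_cos_four_pi_div_fifteen :
    cos (π / 15) - cos (4 * π / 15) = cos (6 * π / 15) := by
  rw [cos_sub_cos, show (π / 15 + 4 * π / 15) / 2 = π / 6 by ring,
    show (π / 15 - 4 * π / 15) / 2 = -(π / 10) by ring, sin_neg, sin_pi_div_six,
    show 6 * π / 15 = π / 2 - π / 10 by ring, cos_pi_div_two_sub]
  ring

theorem stmt_7 :
    Real.sin (2 * π / 15) / Real.sin (π / 15)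
      - Real.sin (7 * π / 15) / Real.sin (4 * π / 15)
      - Real.sin (3 * π / 15) / Real.sin (6 * π / 15) = 0 := by
  have h₁ : sin (π / 15) ≠ 0 := by
    simpa using sin_mul_pi_div_fifteen_ne_zero (k := 1) (by norm_num) (by norm_num)
  have h₄ := sin_mul_pi_div_fifteen_ne_zero (k := 4) (by norm_num) (by norm_num)
  have h₆ := sin_mul_pi_div_fifteen_ne_zero (k := 6) (by norm_num) (by norm_num)
  rw [show 2 * π / 15 = 2 * (π / 15) by ring, sin_two_mul_div_sin h₁,
    show 7 * π / 15 = π - 2 * (4 * π / 15) by ring, sin_pi_sub_two_mul_div_sin h₄,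
    show 3 * π / 15 = π - 2 * (6 * π / 15) by ring, sin_pi_sub_two_mul_div_sin h₆]
  linarith [cos_pi_div_fifteen_sub_cos_four_pi_div_fifteen]
end

section
/- sin(6π/17)/sin(3π/17) - sin(4π/17)/sin(2π/17) - sin(8π/17)/sin(4π/17) + sin(2π/17)/sin(π/17) + sin(7π/17)/sin(5π/17) - sin(5π/17)/sin(6π/17) + sin(3π/17)/sin(7π/17) - sin(π/17)/sin(8π/17) = 1. -/
/-!
Since `sin (2x) / sin x = 2 cos x` and `sin (π - x) = sin x`, the left-hand side is
`2 ∑_{k=1}^{8} (-1)^(k+1) cos (kπ/17)`. Multiplying the alternating sum by `2 cos (θ/2)` makes it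
telescope (`2 cos (θ/2) cos (kθ) = cos ((k - 1/2)θ) + cos ((k + 1/2)θ)`), and for `θ = π/(2n+1)`
the last term `cos ((n + 1/2)θ) = cos (π/2)` vanishes, so the alternating sum is `1/2`.
-/

open Real Finset

theorem two_mul_cos_half_mul_sum_range_neg_one_pow_mul_cos (x : ℝ) (n : ℕ) :
    2 * cos (x / 2) * ∑ k ∈ range n, (-1) ^ k * cos ((k + 1) * x)
      = cos (x / 2) - (-1) ^ n * cos ((n + 1 / 2) * x) := by
  induction n with
  | zero => simp [div_eq_inv_mul]
  | succ n ih =>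
    have hprod : 2 * cos (x / 2) * cos ((n + 1) * x)
        = cos ((n + 1 / 2) * x) + cos ((n + 1 + 1 / 2) * x) := by
      rw [show (n + 1 / 2) * x = (n + 1) * x - x / 2 by ring,
        show (n + 1 + 1 / 2) * x = (n + 1) * x + x / 2 by ring, cos_sub, cos_add]
      ring
    rw [sum_range_succ, mul_add, ih, pow_succ]
    push_cast
    linear_combination (-1) ^ n * hprod

theorem sum_range_neg_one_pow_mul_cos_pi_div {n : ℕ} (hn : 0 < n) :
    ∑ k ∈ range n, (-1) ^ k * cos ((k + 1) * π / (2 * n + 1)) = 1 / 2 := by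
  have hcos_pos : 0 < cos (π / (2 * n + 1) / 2) := by
    apply cos_pos_of_mem_Ioo
    constructor
    · linarith [pi_pos, show 0 < π / (2 * n + 1) / 2 by positivity]
    · rw [div_div, div_lt_div_iff_of_pos_left pi_pos (by positivity) two_pos]
      have : (1 : ℝ) ≤ n := by exact_mod_cast hn
      linarith
  have hlast : cos ((n + 1 / 2) * (π / (2 * n + 1))) = 0 := by
    rw [← cos_pi_div_two]
    congr 1
    field_simp
  have h := two_mul_cos_half_mul_sum_range_neg_one_pow_mul_cos (π / (2 * n + 1)) n
  rw [hlast, mul_zero, sub_zero] at h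
  simp_rw [mul_div_assoc]
  apply mul_left_cancel₀ hcos_pos.ne'
  linear_combination h / 2

theorem sin_div_sin_eq_two_mul_cos {a b : ℝ} (hab : a = 2 * b ∨ a = π - 2 * b)
    (hb : sin b ≠ 0) : sin a / sin b = 2 * cos b := by
  have ha : sin a = sin (2 * b) := by
    rcases hab with rfl | rfl
    · rfl
    · exact sin_pi_sub _
  rw [ha, sin_two_mul, div_eq_iff hb]
  ring

theorem stmt_8 :
    Real.sin (6 * π / 17) / Real.sin (3 * π / 17)
      - Real.sin (4 * π / 17) / Real.sin (2 * π / 17)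
      - Real.sin (8 * π / 17) / Real.sin (4 * π / 17)
      + Real.sin (2 * π / 17) / Real.sin (π / 17)
      + Real.sin (7 * π / 17) / Real.sin (5 * π / 17)
      - Real.sin (5 * π / 17) / Real.sin (6 * π / 17)
      + Real.sin (3 * π / 17) / Real.sin (7 * π / 17)
      - Real.sin (π / 17) / Real.sin (8 * π / 17) = 1 := by
  have hsum := sum_range_neg_one_pow_mul_cos_pi_div (n := 8) (by norm_num)
  simp only [sum_range_succ, sum_range_zero] at hsum
  norm_num at hsum
  rw [sin_div_sin_eq_two_mul_cos (b := 3 * π / 17) (.inl (by ring)) ?_,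
    sin_div_sin_eq_two_mul_cos (b := 2 * π / 17) (.inl (by ring)) ?_,
    sin_div_sin_eq_two_mul_cos (b := 4 * π / 17) (.inl (by ring)) ?_,
    sin_div_sin_eq_two_mul_cos (b := π / 17) (.inl (by ring)) ?_,
    sin_div_sin_eq_two_mul_cos (b := 5 * π / 17) (.inr (by ring)) ?_,
    sin_div_sin_eq_two_mul_cos (b := 6 * π / 17) (.inr (by ring)) ?_,
    sin_div_sin_eq_two_mul_cos (b := 7 * π / 17) (.inr (by ring)) ?_,
    sin_div_sin_eq_two_mul_cos (b := 8 * π / 17) (.inr (by ring)) ?_]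
  · linarith
  all_goals exact (sin_pos_of_pos_of_lt_pi (by positivity) (by linarith [pi_pos])).ne'
end

section
/- sin(6π/17)sin(7π/17)/(sin(3π/17)sin(5π/17)) + sin(4π/17)sin(π/17)/(sin(2π/17)sin(8π/17)) - sin(8π/17)sin(2π/17)/(sin(4π/17)sin(π/17)) - sin(5π/17)sin(3π/17)/(sin(6π/17)sin(7π/17)) = -1. -/
open Real

theorem stmt_9 :
    Real.sin (6 * π / 17) * Real.sin (7 * π / 17) /
      (Real.sin (3 * π / 17) * Real.sin (5 * π / 17))
      + Real.sin (4 * π / 17) * Real.sin (π / 17) /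
        (Real.sin (2 * π / 17) * Real.sin (8 * π / 17))
      - Real.sin (8 * π / 17) * Real.sin (2 * π / 17) /
        (Real.sin (4 * π / 17) * Real.sin (π / 17))
      - Real.sin (5 * π / 17) * Real.sin (3 * π / 17) /
        (Real.sin (6 * π / 17) * Real.sin (7 * π / 17)) = -1 := by
  have hpi := Real.pi_pos
  have hs : ∀ k : ℕ, 1 ≤ k → k ≤ 8 → 0 < Real.sin ((k : ℝ) * π / 17) := by
    intro k h1 h8
    apply Real.sin_pos_of_pos_of_lt_pi
    · have : (1:ℝ) ≤ (k:ℝ) := by exact_mod_cast h1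
      positivity
    · have : (k:ℝ) ≤ 8 := by exact_mod_cast h8
      nlinarith
  set z : ℂ := Complex.exp ((π : ℂ) / 17 * Complex.I) with hzdef
  have hzne : z ≠ 0 := Complex.exp_ne_zero _
  have hz17 : z ^ 17 = -1 := by
    rw [hzdef, ← Complex.exp_nat_mul,
      show ((17:ℕ):ℂ) * ((π:ℂ)/17 * Complex.I) = (π:ℂ) * Complex.I by push_cast; ring,
      Complex.exp_pi_mul_I]
  have hz : z ^ 34 = 1 := by
    rw [show (34:ℕ) = 17 * 2 from rfl, pow_mul, hz17]; norm_num
  have hzim : z.im = Real.sin (π / 17) := by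
    rw [hzdef, show (π:ℂ)/17 * Complex.I = ((π/17 : ℝ):ℂ) * Complex.I by push_cast; ring]
    exact Complex.exp_ofReal_mul_I_im _
  have hzne1 : z ≠ -1 := by
    intro h
    have h1 : Real.sin (π/17) = 0 := by
      rw [← hzim, h]; simp
    have := hs 1 le_rfl (by norm_num)
    simp at this
    rw [h1] at this; exact lt_irrefl _ this
  have hΦ0 : (∑ i ∈ Finset.range 17, (-z)^i) = 0 := by
    have hw : (-z)^17 = 1 := by rw [neg_pow, hz17]; norm_num
    have := geom_sum_mul (-z) 17
    rw [hw, sub_self] at this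
    have hne : -z - 1 ≠ 0 := by
      intro h; apply hzne1; linear_combination -h
    exact (mul_eq_zero.mp this).resolve_right hne
  have hΦ : 1 - z + z^2 - z^3 + z^4 - z^5 + z^6 - z^7 + z^8 - z^9 + z^10 - z^11
      + z^12 - z^13 + z^14 - z^15 + z^16 = 0 := by
    have h := hΦ0
    simp only [Finset.sum_range_succ, Finset.sum_range_zero] at h
    linear_combination h
  have hsin : ∀ k : ℕ, k ≤ 34 →
      ((Real.sin ((k:ℝ) * π / 17) : ℝ) : ℂ) = (z^(34-k) - z^k) * Complex.I / 2 := by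
    intro k hk
    rw [Complex.ofReal_sin, Complex.sin]
    have e1 : Complex.exp (((k:ℝ) * π / 17 : ℝ) * Complex.I) = z ^ k := by
      rw [show (((k:ℝ) * π / 17 : ℝ):ℂ) * Complex.I = ((k:ℕ):ℂ) * ((π:ℂ)/17 * Complex.I) by
        push_cast; ring, Complex.exp_nat_mul, hzdef]
    have e2 : Complex.exp (-(((k:ℝ) * π / 17 : ℝ):ℂ) * Complex.I) = z ^ (34-k) := by
      have m : z^(34-k) * z^k = 1 := by rw [← pow_add, Nat.sub_add_cancel hk, hz]
      have m2 : Complex.exp (-(((k:ℝ) * π / 17 : ℝ):ℂ) * Complex.I) * z^k = 1 := by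
        rw [← e1, ← Complex.exp_add,
          show -(((k:ℝ) * π / 17 : ℝ):ℂ) * Complex.I + (((k:ℝ) * π / 17 : ℝ):ℂ) * Complex.I = 0 by ring,
          Complex.exp_zero]
      exact mul_right_cancel₀ (pow_ne_zero _ hzne) (m2.trans m.symm)
    rw [e1, e2]
  have h1 : ((Real.sin (π / 17) : ℝ) : ℂ) = (z^33 - z) * Complex.I / 2 := by
    simpa using hsin 1 (by norm_num)
  have hr1 : Real.sin (π / 17) ≠ 0 := by
    have := hs 1 (by norm_num) (by norm_num); norm_num at this; exact ne_of_gt this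
  have hne1 : z^33 - z ≠ 0 := by
    intro h
    have h0 : ((Real.sin (π / 17) : ℝ) : ℂ) = 0 := by rw [h1, h]; ring
    exact hr1 (by exact_mod_cast h0)
  have h2 : ((Real.sin (2 * π / 17) : ℝ) : ℂ) = (z^32 - z^2) * Complex.I / 2 := by
    simpa using hsin 2 (by norm_num)
  have hr2 : Real.sin (2 * π / 17) ≠ 0 := by
    have := hs 2 (by norm_num) (by norm_num); norm_num at this; exact ne_of_gt this
  have hne2 : z^32 - z^2 ≠ 0 := by
    intro h
    have h0 : ((Real.sin (2 * π / 17) : ℝ) : ℂ) = 0 := by rw [h2, h]; ring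
    exact hr2 (by exact_mod_cast h0)
  have h3 : ((Real.sin (3 * π / 17) : ℝ) : ℂ) = (z^31 - z^3) * Complex.I / 2 := by
    simpa using hsin 3 (by norm_num)
  have hr3 : Real.sin (3 * π / 17) ≠ 0 := by
    have := hs 3 (by norm_num) (by norm_num); norm_num at this; exact ne_of_gt this
  have hne3 : z^31 - z^3 ≠ 0 := by
    intro h
    have h0 : ((Real.sin (3 * π / 17) : ℝ) : ℂ) = 0 := by rw [h3, h]; ring
    exact hr3 (by exact_mod_cast h0)
  have h4 : ((Real.sin (4 * π / 17) : ℝ) : ℂ) = (z^30 - z^4) * Complex.I / 2 := by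
    simpa using hsin 4 (by norm_num)
  have hr4 : Real.sin (4 * π / 17) ≠ 0 := by
    have := hs 4 (by norm_num) (by norm_num); norm_num at this; exact ne_of_gt this
  have hne4 : z^30 - z^4 ≠ 0 := by
    intro h
    have h0 : ((Real.sin (4 * π / 17) : ℝ) : ℂ) = 0 := by rw [h4, h]; ring
    exact hr4 (by exact_mod_cast h0)
  have h5 : ((Real.sin (5 * π / 17) : ℝ) : ℂ) = (z^29 - z^5) * Complex.I / 2 := by
    simpa using hsin 5 (by norm_num)
  have hr5 : Real.sin (5 * π / 17) ≠ 0 := by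
    have := hs 5 (by norm_num) (by norm_num); norm_num at this; exact ne_of_gt this
  have hne5 : z^29 - z^5 ≠ 0 := by
    intro h
    have h0 : ((Real.sin (5 * π / 17) : ℝ) : ℂ) = 0 := by rw [h5, h]; ring
    exact hr5 (by exact_mod_cast h0)
  have h6 : ((Real.sin (6 * π / 17) : ℝ) : ℂ) = (z^28 - z^6) * Complex.I / 2 := by
    simpa using hsin 6 (by norm_num)
  have hr6 : Real.sin (6 * π / 17) ≠ 0 := by
    have := hs 6 (by norm_num) (by norm_num); norm_num at this; exact ne_of_gt this
  have hne6 : z^28 - z^6 ≠ 0 := by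
    intro h
    have h0 : ((Real.sin (6 * π / 17) : ℝ) : ℂ) = 0 := by rw [h6, h]; ring
    exact hr6 (by exact_mod_cast h0)
  have h7 : ((Real.sin (7 * π / 17) : ℝ) : ℂ) = (z^27 - z^7) * Complex.I / 2 := by
    simpa using hsin 7 (by norm_num)
  have hr7 : Real.sin (7 * π / 17) ≠ 0 := by
    have := hs 7 (by norm_num) (by norm_num); norm_num at this; exact ne_of_gt this
  have hne7 : z^27 - z^7 ≠ 0 := by
    intro h
    have h0 : ((Real.sin (7 * π / 17) : ℝ) : ℂ) = 0 := by rw [h7, h]; ring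
    exact hr7 (by exact_mod_cast h0)
  have h8 : ((Real.sin (8 * π / 17) : ℝ) : ℂ) = (z^26 - z^8) * Complex.I / 2 := by
    simpa using hsin 8 (by norm_num)
  have hr8 : Real.sin (8 * π / 17) ≠ 0 := by
    have := hs 8 (by norm_num) (by norm_num); norm_num at this; exact ne_of_gt this
  have hne8 : z^26 - z^8 ≠ 0 := by
    intro h
    have h0 : ((Real.sin (8 * π / 17) : ℝ) : ℂ) = 0 := by rw [h8, h]; ring
    exact hr8 (by exact_mod_cast h0)
  have hC : ((Real.sin (6 * π / 17) : ℝ) : ℂ) * ((Real.sin (7 * π / 17) : ℝ) : ℂ) /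
      (((Real.sin (3 * π / 17) : ℝ) : ℂ) * ((Real.sin (5 * π / 17) : ℝ) : ℂ))
      + ((Real.sin (4 * π / 17) : ℝ) : ℂ) * ((Real.sin (π / 17) : ℝ) : ℂ) /
        (((Real.sin (2 * π / 17) : ℝ) : ℂ) * ((Real.sin (8 * π / 17) : ℝ) : ℂ))
      - ((Real.sin (8 * π / 17) : ℝ) : ℂ) * ((Real.sin (2 * π / 17) : ℝ) : ℂ) /
        (((Real.sin (4 * π / 17) : ℝ) : ℂ) * ((Real.sin (π / 17) : ℝ) : ℂ))
      - ((Real.sin (5 * π / 17) : ℝ) : ℂ) * ((Real.sin (3 * π / 17) : ℝ) : ℂ) /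
        (((Real.sin (6 * π / 17) : ℝ) : ℂ) * ((Real.sin (7 * π / 17) : ℝ) : ℂ)) = -1 := by
    rw [h1, h2, h3, h4, h5, h6, h7, h8]
    have aux2 : ∀ X Y U V : ℂ, U ≠ 0 → V ≠ 0 →
        ((X * Complex.I / 2) * (Y * Complex.I / 2)) / ((U * Complex.I / 2) * (V * Complex.I / 2))
          = (X * Y) / (U * V) := by
      intro X Y U V hU hV
      rw [div_eq_div_iff (by
          exact mul_ne_zero (div_ne_zero (mul_ne_zero hU Complex.I_ne_zero) two_ne_zero)
            (div_ne_zero (mul_ne_zero hV Complex.I_ne_zero) two_ne_zero))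
        (mul_ne_zero hU hV)]
      ring
    rw [aux2 _ _ _ _ hne3 hne5, aux2 _ _ _ _ hne2 hne8, aux2 _ _ _ _ hne4 hne1,
      aux2 _ _ _ _ hne6 hne7]
    have aux : ∀ a b c d e f g h : ℂ, b ≠ 0 → d ≠ 0 → f ≠ 0 → h ≠ 0 →
        a * d * f * h + c * b * f * h - e * b * d * h - g * b * d * f = -(b * d * f * h) →
        a / b + c / d - e / f - g / h = -1 := by
      intro a b c d e f g h hb hd hf hh key
      have expand : a / b + c / d - e / f - g / h
          = (a * d * f * h + c * b * f * h - e * b * d * h - g * b * d * f) / (b * d * f * h) := by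
        field_simp
      rw [expand, key, neg_div, div_self (by exact mul_ne_zero (mul_ne_zero (mul_ne_zero hb hd) hf) hh)]
    apply aux _ _ _ _ _ _ _ _ (mul_ne_zero hne3 hne5) (mul_ne_zero hne2 hne8)
      (mul_ne_zero hne4 hne1) (mul_ne_zero hne6 hne7)
    linear_combination ((1) * z^17 + (2) * z^16 + (-2) * z^12 + (-2) * z^11 + (2) * z^9 + (-2) * z^7 + (-2) * z^6 + (2) * z^2 + (1) * z) * hΦ + ((1) * z^202 + (1) * z^189 + (-1) * z^187 + (-1) * z^185 + (-1) * z^184 + (1) * z^183 + (-1) * z^182 + (-1) * z^181 + (-1) * z^180 + (2) * z^179 + (-1) * z^178 + (-1) * z^176 + (-2) * z^175 + (-1) * z^174 + (1) * z^173 + (-1) * z^172 + (-1) * z^171 + (-1) * z^170 + (1) * z^169 + (1) * z^168 + (1) * z^167 + (-2) * z^165 + (1) * z^164 + (1) * z^162 + (2) * z^160 + (1) * z^159 + (2) * z^158 + (1) * z^157 + (3) * z^156 + (2) * z^155 + (3) * z^154 + (4) * z^152 + (-4) * z^151 + (2) * z^150 + (2) * z^148 + (-1) * z^147 + (1) * z^146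 + (2) * z^145 + (1) * z^144 + (1) * z^143 + (-1) * z^142 + (-1) * z^140 + (-3) * z^138 + (-2) * z^137 + (-4) * z^136 + (1) * z^135 + (-3) * z^134 + (-1) * z^133 + (-5) * z^132 + (-5) * z^130 + (-1) * z^129 + (-5) * z^128 + (-4) * z^126 + (2) * z^125 + (-4) * z^124 + (-1) * z^123 + (-2) * z^122 + (4) * z^121 + (-1) * z^120 + (2) * z^118 + (-3) * z^117 + (1) * z^116 + (2) * z^115 + (3) * z^114 + (-3) * z^113 + (3) * z^112 + (1) * z^111 + (6) * z^110 + (4) * z^108 + (-1) * z^107 + (6) * z^106 + (4) * z^104 + (4) * z^102 + (3) * z^101 + (4) * z^100 + (-1) * z^99 + (2) * z^98 + (-1) * z^97 + (-2) * z^95 + (-1) * z^93 + (-2) * z^92 + (-3) * z^90 + (1) * z^89 + (-3) * z^88 + (5) * z^87 + (-3) * z^86 + (-2) * z^84 + (-1) * z^83 + (-4) * z^82 + (-3) * z^80 + (-2) * z^79 + (-3) * z^78 + (1) * z^77 + (-1) * z^75 + (-2) * z^74 + (1) * z^73 + (1) * z^72 + (-2) * z^71 + (1) * z^68 + (2) *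 z^67 + (2) * z^66 + (-2) * z^65 + (2) * z^64 + (1) * z^63 + (-1) * z^61 + (2) * z^60 + (-1) * z^59 + (2) * z^53 + (1) * z^52 + (1) * z^51 + (1) * z^50 + (-1) * z^48 + (1) * z^47 + (-1) * z^46 + (-1) * z^45 + (-1) * z^44 + (1) * z^43 + (1) * z^42 + (-1) * z^41 + (-1) * z^40 + (-1) * z^39 + (1) * z^38 + (-1) * z^37 + (1) * z^35 + (1) * z^33 + (1) * z^32 + (-1) * z^31 + (1) * z^30 + (-1) * z^29 + (-1) * z^28 + (-1) * z^27 + (1) * z^26 + (1) * z^25 + (-1) * z^24 + (-1) * z^23 + (-1) * z^22 + (1) * z^21 + (-1) * z^20 + (1) * z^19 + (1) * z^18 + (1) * z^16 + (1) * z^15 + (-1) * z^14 + (1) * z^13 + (-1) * z^12 + (-1) * z^11 + (-1) * z^10 + (1) * z^9 + (1) * z^8 + (-1) * z^7 + (-1) * z^6 + (-1) * z^5 + (1) * z^4 + (-1) * z^3 + (1) * z^2 + (1) * z) * hz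
  exact_mod_cast hC
end

section
/- sin(4π/13)sin(6π/13)/(sin(2π/13)sin(3π/13)) - sin(2π/13)sin(3π/13)/(sin(π/13)sin(5π/13)) - sin(5π/13)sin(π/13)/(sin(4π/13)sin(6π/13)) = 1. -/
/-!
Since sin(kθ) = sin θ · U_{k-1}(cos θ), every product of two sines in the identity is
sin²(π/13) times a product of Chebyshev polynomials evaluated at c = cos(π/13). Clearing
denominators turns the identity into a polynomial identity in c, which holds because its
left-hand side is a multiple of U₆ - U₅, and U₆(c) = U₅(c) expresses sin(7π/13) = sin(6π/13).
-/

open Real Polynomial Polynomial.Chebyshev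

namespace Polynomial.Chebyshev

variable (R : Type*) [CommRing R]

theorem U_three : U R 3 = 8 * X ^ 3 - 4 * X := by
  rw [U_eq, show (3 : ℤ) - 1 = 2 by norm_num, show (3 : ℤ) - 2 = 1 by norm_num, U_two, U_one]
  ring

theorem U_four : U R 4 = 16 * X ^ 4 - 12 * X ^ 2 + 1 := by
  rw [U_eq, show (4 : ℤ) - 1 = 3 by norm_num, show (4 : ℤ) - 2 = 2 by norm_num, U_three, U_two]
  ring

theorem U_five : U R 5 = 32 * X ^ 5 - 32 * X ^ 3 + 6 * X := by
  rw [U_eq, show (5 : ℤ) - 1 = 4 by norm_num, show (5 : ℤ) - 2 = 3 by norm_num, U_four, U_three]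
  ring

theorem U_six : U R 6 = 64 * X ^ 6 - 80 * X ^ 4 + 24 * X ^ 2 - 1 := by
  rw [U_eq, show (6 : ℤ) - 1 = 5 by norm_num, show (6 : ℤ) - 2 = 4 by norm_num, U_five, U_four]
  ring

theorem U_four_mul_sq_sub_eq_mul_U_six_sub_U_five :
    U R 4 * (U R 3 * U R 5) ^ 2 - (U R 1 * U R 2) ^ 2 * (U R 3 * U R 5)
      - U R 4 ^ 2 * (U R 1 * U R 2) - U R 4 * (U R 1 * U R 2) * (U R 3 * U R 5)
      = (16384 * X ^ 14 + 8192 * X ^ 13 - 36864 * X ^ 12 - 16384 * X ^ 11 + 32768 * X ^ 10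
          + 12288 * X ^ 9 - 14592 * X ^ 8 - 4224 * X ^ 7 + 3328 * X ^ 6 + 608 * X ^ 5
          - 352 * X ^ 4 - 16 * X ^ 3 + 12 * X ^ 2 - 2 * X) * (U R 6 - U R 5) := by
  rw [U_one, U_two, U_three, U_four, U_five, U_six]
  ring

end Polynomial.Chebyshev

theorem Real.sin_mul_pi_div_pos {x y : ℝ} (hx : 0 < x) (hxy : x < y) : 0 < sin (x * π / y) := by
  apply sin_pos_of_pos_of_lt_pi
  · have := hx.trans hxy
    positivity
  · rw [div_lt_iff₀ (hx.trans hxy), mul_comm]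
    exact mul_lt_mul_of_pos_left hxy pi_pos

-- `sin ((n + 1) θ) = sin (n θ)` for `θ = π / (2n + 1)`, and `sin θ ≠ 0` lets us cancel it.
theorem Polynomial.Chebyshev.U_eval_cos_pi_div_eq {n : ℕ} (hn : 0 < n) :
    (U ℝ n).eval (cos (π / (2 * n + 1))) = (U ℝ (n - 1)).eval (cos (π / (2 * n + 1))) := by
  set θ := π / (2 * n + 1)
  have hθ : sin θ ≠ 0 := by
    have hn' : (0 : ℝ) < n := by exact_mod_cast hn
    have := sin_mul_pi_div_pos (x := 1) (y := 2 * n + 1) one_pos (by linarith)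
    rw [one_mul] at this
    exact this.ne'
  have hsin : sin ((n + 1) * θ) = sin (n * θ) := by
    rw [← sin_pi_sub]
    congr 1
    simp only [θ]
    field_simp
    ring
  refine mul_right_cancel₀ hθ ?_
  rw [U_real_cos, U_real_cos]
  push_cast
  rw [sub_add_cancel, hsin]

theorem div_sub_div_sub_div_eq_one {K : Type*} [Field K] {a b d : K} (ha : a ≠ 0) (hb : b ≠ 0)
    (hd : d ≠ 0) (h : a * d ^ 2 - b ^ 2 * d - a ^ 2 * b = a * b * d) :
    d / b - b / a - a / d = 1 := by
  field_simp
  linear_combination h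

theorem stmt_12 :
    Real.sin (4 * π / 13) * Real.sin (6 * π / 13) /
      (Real.sin (2 * π / 13) * Real.sin (3 * π / 13))
      - Real.sin (2 * π / 13) * Real.sin (3 * π / 13) /
        (Real.sin (π / 13) * Real.sin (5 * π / 13))
      - Real.sin (5 * π / 13) * Real.sin (π / 13) /
        (Real.sin (4 * π / 13) * Real.sin (6 * π / 13)) = 1 := by
  set c := cos (π / 13)
  have hroot : (U ℝ 6).eval c = (U ℝ 5).eval c := by
    have := U_eval_cos_pi_div_eq (n := 6) (by norm_num)
    norm_num at this
    exact this
  have hsin : ∀ k : ℤ, sin ((k + 1) * π / 13) = (U ℝ k).eval c * sin (π / 13) := fun k => by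
    rw [U_real_cos, mul_div_assoc]
  have h2 : sin (2 * π / 13) = (U ℝ 1).eval c * sin (π / 13) := by rw [← hsin]; norm_num
  have h3 : sin (3 * π / 13) = (U ℝ 2).eval c * sin (π / 13) := by rw [← hsin]; norm_num
  have h4 : sin (4 * π / 13) = (U ℝ 3).eval c * sin (π / 13) := by rw [← hsin]; norm_num
  have h5 : sin (5 * π / 13) = (U ℝ 4).eval c * sin (π / 13) := by rw [← hsin]; norm_num
  have h6 : sin (6 * π / 13) = (U ℝ 5).eval c * sin (π / 13) := by rw [← hsin]; norm_num
  have key := congrArg (eval c) (U_four_mul_sq_sub_eq_mul_U_six_sub_U_five ℝ)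
  simp only [eval_sub, eval_mul, eval_pow, hroot, sub_self, mul_zero] at key
  rw [mul_comm (sin (5 * π / 13))]
  have hpos : ∀ x : ℝ, 0 < x → x < 13 → sin (x * π / 13) ≠ 0 := fun x hx hx13 =>
    (sin_mul_pi_div_pos hx hx13).ne'
  have hs1 : sin (π / 13) ≠ 0 := by simpa using hpos 1 one_pos (by norm_num)
  refine div_sub_div_sub_div_eq_one (mul_ne_zero hs1 (hpos 5 (by norm_num) (by norm_num)))
    (mul_ne_zero (hpos 2 (by norm_num) (by norm_num)) (hpos 3 (by norm_num) (by norm_num)))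
    (mul_ne_zero (hpos 4 (by norm_num) (by norm_num)) (hpos 6 (by norm_num) (by norm_num))) ?_
  rw [h2, h3, h4, h5, h6]
  linear_combination sin (π / 13) ^ 6 * key
end

section
/- sin(2π/13)sin(3π/13)/(sin(4π/13)sin(6π/13)) - sin(π/13)sin(5π/13)/(sin(2π/13)sin(3π/13)) - sin(4π/13)sin(6π/13)/(sin(5π/13)sin(π/13)) = -4. -/
/-!
Put `θ = π / 13` and `x = 2 cos θ`. The recurrence
`sin ((k + 2) θ) = 2 cos θ · sin ((k + 1) θ) - sin (k θ)` writes every `sin (k θ)` as `sin θ`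
times a polynomial in `x`, and `sin (7 θ) = sin (π - 6 θ) = sin (6 θ)` shows that `x` is a root of
`x⁶ - x⁵ - 5x⁴ + 4x³ + 6x² - 3x - 1`. After clearing denominators, the identity becomes
`sin θ ^ 6` times a polynomial in `x` that is a multiple of this sextic.
-/

open Real

theorem sin_mul_add_two (a θ : ℝ) :
    sin ((a + 2) * θ) = 2 * cos θ * sin ((a + 1) * θ) - sin (a * θ) := by
  rw [show (a + 2) * θ = (a + 1) * θ + θ by ring, show a * θ = (a + 1) * θ - θ by ring,
    sin_add, sin_sub]
  ring

/- These are `sin ((n + 1) θ) = S n (2 cos θ) * sin θ` (`Polynomial.Chebyshev.S_two_mul_real_cos`)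
with the Vieta–Fibonacci polynomials `S n` written out. -/
section Chebyshev

variable (θ : ℝ)

theorem sin_two_mul_eq_chebyshev : sin (2 * θ) = 2 * cos θ * sin θ := by
  rw [sin_two_mul]
  ring

theorem sin_three_mul_eq_chebyshev : sin (3 * θ) = ((2 * cos θ) ^ 2 - 1) * sin θ := by
  linear_combination (norm := ring_nf)
    sin_mul_add_two 1 θ + 2 * cos θ * sin_two_mul_eq_chebyshev θ

theorem sin_four_mul_eq_chebyshev :
    sin (4 * θ) = ((2 * cos θ) ^ 3 - 2 * (2 * cos θ)) * sin θ := by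
  linear_combination (norm := ring_nf) sin_mul_add_two 2 θ +
    2 * cos θ * sin_three_mul_eq_chebyshev θ - sin_two_mul_eq_chebyshev θ

theorem sin_five_mul_eq_chebyshev :
    sin (5 * θ) = ((2 * cos θ) ^ 4 - 3 * (2 * cos θ) ^ 2 + 1) * sin θ := by
  linear_combination (norm := ring_nf) sin_mul_add_two 3 θ +
    2 * cos θ * sin_four_mul_eq_chebyshev θ - sin_three_mul_eq_chebyshev θ

theorem sin_six_mul_eq_chebyshev :
    sin (6 * θ) = ((2 * cos θ) ^ 5 - 4 * (2 * cos θ) ^ 3 + 3 * (2 * cos θ)) * sin θ := by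
  linear_combination (norm := ring_nf) sin_mul_add_two 4 θ +
    2 * cos θ * sin_five_mul_eq_chebyshev θ - sin_four_mul_eq_chebyshev θ

theorem sin_seven_mul_eq_chebyshev :
    sin (7 * θ) =
      ((2 * cos θ) ^ 6 - 5 * (2 * cos θ) ^ 4 + 6 * (2 * cos θ) ^ 2 - 1) * sin θ := by
  linear_combination (norm := ring_nf) sin_mul_add_two 5 θ +
    2 * cos θ * sin_six_mul_eq_chebyshev θ - sin_five_mul_eq_chebyshev θ

end Chebyshev

theorem sin_mul_pos_of_mul_eq_pi {θ n k : ℝ} (hθ : n * θ = π) (hk₀ : 0 < k) (hk : k < n) :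
    0 < sin (k * θ) := by
  have hθ₀ : 0 < θ := by
    by_contra! h
    nlinarith [pi_pos]
  exact sin_pos_of_pos_of_lt_pi (by positivity) (by rw [← hθ]; gcongr)

theorem two_cos_sextic_eq_zero {θ x : ℝ} (hθ : 13 * θ = π) (hx : 2 * cos θ = x) :
    x ^ 6 - x ^ 5 - 5 * x ^ 4 + 4 * x ^ 3 + 6 * x ^ 2 - 3 * x - 1 = 0 := by
  have hs : sin θ ≠ 0 := by
    simpa using (sin_mul_pos_of_mul_eq_pi hθ one_pos (by norm_num)).ne'
  have h76 : sin (7 * θ) = sin (6 * θ) := by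
    rw [← sin_pi_sub, ← hθ]
    ring_nf
  subst hx
  apply mul_right_cancel₀ hs
  linear_combination h76 - sin_seven_mul_eq_chebyshev θ + sin_six_mul_eq_chebyshev θ

theorem sin_identity_of_thirteen_mul_eq_pi {θ : ℝ} (hθ : 13 * θ = π) :
    sin (2 * θ) * sin (3 * θ) / (sin (4 * θ) * sin (6 * θ))
      - sin θ * sin (5 * θ) / (sin (2 * θ) * sin (3 * θ))
      - sin (4 * θ) * sin (6 * θ) / (sin (5 * θ) * sin θ) = -4 := by
  have hpos {k : ℝ} (hk₀ : 0 < k) (hk : k < 13) : sin (k * θ) ≠ 0 :=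
    (sin_mul_pos_of_mul_eq_pi hθ hk₀ hk).ne'
  have h₁ : sin θ ≠ 0 := by simpa using hpos one_pos (by norm_num)
  have h₂ := hpos two_pos (by norm_num)
  have h₃ := hpos three_pos (by norm_num)
  have h₄ := hpos four_pos (by norm_num)
  have h₅ := hpos (by norm_num : (0 : ℝ) < 5) (by norm_num)
  have h₆ := hpos (by norm_num : (0 : ℝ) < 6) (by norm_num)
  have key : sin (2 * θ) ^ 2 * sin (3 * θ) ^ 2 * (sin θ * sin (5 * θ))
      - sin θ ^ 2 * sin (5 * θ) ^ 2 * (sin (4 * θ) * sin (6 * θ))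
      - sin (4 * θ) ^ 2 * sin (6 * θ) ^ 2 * (sin (2 * θ) * sin (3 * θ))
      + 4 * (sin θ * sin (2 * θ) * sin (3 * θ) * sin (4 * θ) * sin (5 * θ) * sin (6 * θ))
      = 0 := by
    rw [sin_two_mul_eq_chebyshev, sin_three_mul_eq_chebyshev, sin_four_mul_eq_chebyshev,
      sin_five_mul_eq_chebyshev, sin_six_mul_eq_chebyshev]
    have hx := two_cos_sextic_eq_zero hθ rfl
    generalize 2 * cos θ = x at hx ⊢
    -- the left side is now `sin θ ^ 6` times a degree-19 polynomial in `x`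
    linear_combination -sin θ ^ 6 * x ^ 2 * (x ^ 11 + x ^ 10 - 7 * x ^ 9 - 5 * x ^ 8 + 16 * x ^ 7
      + 4 * x ^ 6 - 12 * x ^ 5 + 12 * x ^ 4 - x ^ 3 - 19 * x ^ 2 + 3 * x + 7) * hx
  rw [div_sub_div _ _ (mul_ne_zero h₄ h₆) (mul_ne_zero h₂ h₃),
    div_sub_div _ _ (by positivity) (mul_ne_zero h₅ h₁), div_eq_iff (by positivity)]
  linear_combination key

theorem stmt_13 :
    Real.sin (2 * π / 13) * Real.sin (3 * π / 13) /
      (Real.sin (4 * π / 13) * Real.sin (6 * π / 13))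
      - Real.sin (π / 13) * Real.sin (5 * π / 13) /
        (Real.sin (2 * π / 13) * Real.sin (3 * π / 13))
      - Real.sin (4 * π / 13) * Real.sin (6 * π / 13) /
        (Real.sin (5 * π / 13) * Real.sin (π / 13)) = -4 := by
  simpa only [mul_div_assoc] using sin_identity_of_thirteen_mul_eq_pi (θ := π / 13) (by ring)
end

section
/- sin(6π/13)sin(2π/13)sin(5π/13)/(sin(4π/13)sin(3π/13)sin(π/13)) = (3 + √13)/2. -/
open Real

private lemma cosmul13 (p q : ℝ) :
    Real.cos p * Real.cos q = (Real.cos (p + q) + Real.cos (p - q)) / 2 := by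
  rw [Real.cos_add, Real.cos_sub]; ring

private lemma sinshift13 (p q : ℝ) :
    Real.sin (p + q) - Real.sin (p - q) = 2 * Real.cos p * Real.sin q := by
  rw [Real.sin_add, Real.sin_sub]; ring

set_option maxHeartbeats 2000000 in
theorem stmt_15 :
    Real.sin (6 * π / 13) * Real.sin (2 * π / 13) * Real.sin (5 * π / 13) /
      (Real.sin (4 * π / 13) * Real.sin (3 * π / 13) * Real.sin (π / 13))
      = (3 + Real.sqrt 13) / 2 := by
  have hπ := Real.pi_pos
  set a := Real.cos (2 * π / 13) with ha
  set b := Real.cos (4 * π / 13) with hb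
  set c := Real.cos (6 * π / 13) with hc
  set d := Real.cos (8 * π / 13) with hd
  set e := Real.cos (10 * π / 13) with he
  set f := Real.cos (12 * π / 13) with hf
  -- reductions
  have h14 : Real.cos (14 * π / 13) = f := by
    rw [hf, show 14 * π / 13 = 2 * π - 12 * π / 13 by ring, Real.cos_two_pi_sub]
  have h16 : Real.cos (16 * π / 13) = e := by
    rw [he, show 16 * π / 13 = 2 * π - 10 * π / 13 by ring, Real.cos_two_pi_sub]
  have h22 : Real.cos (22 * π / 13) = b := by
    rw [hb, show 22 * π / 13 = 2 * π - 4 * π / 13 by ring, Real.cos_two_pi_sub]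
  -- product-to-sum identities
  have P1 : a * a = (b + 1) / 2 := by
    rw [ha, hb, cosmul13, show 2 * π / 13 + 2 * π / 13 = 4 * π / 13 by ring,
      show 2 * π / 13 - 2 * π / 13 = (0:ℝ) by ring, Real.cos_zero]
  have P2 : c * c = (f + 1) / 2 := by
    rw [hc, hf, cosmul13, show 6 * π / 13 + 6 * π / 13 = 12 * π / 13 by ring,
      show 6 * π / 13 - 6 * π / 13 = (0:ℝ) by ring, Real.cos_zero]
  have P3 : d * d = (e + 1) / 2 := by
    rw [hd, cosmul13, show 8 * π / 13 + 8 * π / 13 = 16 * π / 13 by ring,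
      show 8 * π / 13 - 8 * π / 13 = (0:ℝ) by ring, Real.cos_zero, h16]
  have P4 : c * a = (b + d) / 2 := by
    rw [ha, hb, hc, hd, cosmul13, show 6 * π / 13 + 2 * π / 13 = 8 * π / 13 by ring,
      show 6 * π / 13 - 2 * π / 13 = 4 * π / 13 by ring]
    ring
  have P5 : d * a = (c + e) / 2 := by
    rw [ha, hc, hd, he, cosmul13, show 8 * π / 13 + 2 * π / 13 = 10 * π / 13 by ring,
      show 8 * π / 13 - 2 * π / 13 = 6 * π / 13 by ring]
    ring
  have P6 : d * c = (a + f) / 2 := by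
    rw [ha, hc, hd, cosmul13, show 8 * π / 13 + 6 * π / 13 = 14 * π / 13 by ring,
      show 8 * π / 13 - 6 * π / 13 = 2 * π / 13 by ring, h14]
    ring
  have P13 : d * b = (b + f) / 2 := by
    rw [hb, hd, cosmul13, show 8 * π / 13 + 4 * π / 13 = 12 * π / 13 by ring,
      show 8 * π / 13 - 4 * π / 13 = 4 * π / 13 by ring]
    rw [← hb, ← hf]; ring
  have P8 : e * b = (c + f) / 2 := by
    rw [hb, he, cosmul13, show 10 * π / 13 + 4 * π / 13 = 14 * π / 13 by ring,
      show 10 * π / 13 - 4 * π / 13 = 6 * π / 13 by ring, h14]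
    rw [← hc]; ring
  have P9 : f * b = (d + e) / 2 := by
    rw [hb, hf, cosmul13, show 12 * π / 13 + 4 * π / 13 = 16 * π / 13 by ring,
      show 12 * π / 13 - 4 * π / 13 = 8 * π / 13 by ring, h16]
    rw [← hd]; ring
  have P10 : f * e = (a + b) / 2 := by
    rw [he, hf, cosmul13, show 12 * π / 13 + 10 * π / 13 = 22 * π / 13 by ring,
      show 12 * π / 13 - 10 * π / 13 = 2 * π / 13 by ring, h22]
    rw [← ha]; ring
  have P11 : b * b = (d + 1) / 2 := by
    rw [hb, hd, cosmul13, show 4 * π / 13 + 4 * π / 13 = 8 * π / 13 by ring,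
      show 4 * π / 13 - 4 * π / 13 = (0:ℝ) by ring, Real.cos_zero]
  have P12 : b * a = (a + c) / 2 := by
    rw [ha, hb, hc, cosmul13, show 4 * π / 13 + 2 * π / 13 = 6 * π / 13 by ring,
      show 4 * π / 13 - 2 * π / 13 = 2 * π / 13 by ring]
    ring
  -- telescoping sum : a+b+c+d+e+f = -1/2
  have S1 : Real.sin (3 * π / 13) - Real.sin (π / 13) = 2 * a * Real.sin (π / 13) := by
    have h := sinshift13 (2 * π / 13) (π / 13)
    rw [show 2 * π / 13 + π / 13 = 3 * π / 13 by ring,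
      show 2 * π / 13 - π / 13 = π / 13 by ring] at h
    rw [ha]; exact h
  have S2 : Real.sin (5 * π / 13) - Real.sin (3 * π / 13) = 2 * b * Real.sin (π / 13) := by
    have h := sinshift13 (4 * π / 13) (π / 13)
    rw [show 4 * π / 13 + π / 13 = 5 * π / 13 by ring,
      show 4 * π / 13 - π / 13 = 3 * π / 13 by ring] at h
    rw [hb]; exact h
  have S3 : Real.sin (7 * π / 13) - Real.sin (5 * π / 13) = 2 * c * Real.sin (π / 13) := by
    have h := sinshift13 (6 * π / 13) (π / 13)
    rw [show 6 * π / 13 + π / 13 = 7 * π / 13 by ring,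
      show 6 * π / 13 - π / 13 = 5 * π / 13 by ring] at h
    rw [hc]; exact h
  have S4 : Real.sin (9 * π / 13) - Real.sin (7 * π / 13) = 2 * d * Real.sin (π / 13) := by
    have h := sinshift13 (8 * π / 13) (π / 13)
    rw [show 8 * π / 13 + π / 13 = 9 * π / 13 by ring,
      show 8 * π / 13 - π / 13 = 7 * π / 13 by ring] at h
    rw [hd]; exact h
  have S5 : Real.sin (11 * π / 13) - Real.sin (9 * π / 13) = 2 * e * Real.sin (π / 13) := by
    have h := sinshift13 (10 * π / 13) (π / 13)
    rw [show 10 * π / 13 + π / 13 = 11 * π / 13 by ring,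
      show 10 * π / 13 - π / 13 = 9 * π / 13 by ring] at h
    rw [he]; exact h
  have S6 : Real.sin (13 * π / 13) - Real.sin (11 * π / 13) = 2 * f * Real.sin (π / 13) := by
    have h := sinshift13 (12 * π / 13) (π / 13)
    rw [show 12 * π / 13 + π / 13 = 13 * π / 13 by ring,
      show 12 * π / 13 - π / 13 = 11 * π / 13 by ring] at h
    rw [hf]; exact h
  have h13pi : Real.sin (13 * π / 13) = 0 := by
    rw [show 13 * π / 13 = π by ring, Real.sin_pi]
  -- positivity of the sines
  have hp1 : 0 < Real.sin (π / 13) :=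
    Real.sin_pos_of_pos_of_lt_pi (by positivity) (by linarith)
  have hp2 : 0 < Real.sin (2 * π / 13) :=
    Real.sin_pos_of_pos_of_lt_pi (by positivity) (by linarith)
  have hp3 : 0 < Real.sin (3 * π / 13) :=
    Real.sin_pos_of_pos_of_lt_pi (by positivity) (by linarith)
  have hp4 : 0 < Real.sin (4 * π / 13) :=
    Real.sin_pos_of_pos_of_lt_pi (by positivity) (by linarith)
  have hp5 : 0 < Real.sin (5 * π / 13) :=
    Real.sin_pos_of_pos_of_lt_pi (by positivity) (by linarith)
  have hp6 : 0 < Real.sin (6 * π / 13) :=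
    Real.sin_pos_of_pos_of_lt_pi (by positivity) (by linarith)
  have hmul0 : Real.sin (π / 13) * (2 * (a + b + c + d + e + f) + 1) = 0 := by
    linear_combination h13pi - S1 - S2 - S3 - S4 - S5 - S6
  have hF1 : a + b + c + d + e + f = -(1/2) := by
    rcases mul_eq_zero.mp hmul0 with h | h
    · exact absurd h (ne_of_gt hp1)
    · linarith
  -- the quadratic satisfied by s = a + c + d
  have hs2 : (a + c + d) ^ 2 = 3 / 4 - (a + c + d) / 2 := by
    linear_combination P1 + P2 + P3 + 2 * P4 + 2 * P5 + 2 * P6 + (3/2) * hF1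
  -- triple products
  have hacd : a * c * d = (b + e + f + 1) / 4 := by
    linear_combination d * P4 + (1/2) * P13 + (1/2) * P3
  have hbef : b * e * f = (a + c + d + 1) / 4 := by
    linear_combination b * P10 + (1/2) * P12 + (1/2) * P11
  have hD3 : (1 - a) * (1 - c) * (1 - d) = (5 - 6 * (a + c + d)) / 8 := by
    linear_combination P4 + P5 + P6 - hacd + (1/4) * hF1
  have hN3 : (1 - b) * (1 - e) * (1 - f) = (8 + 6 * (a + c + d)) / 8 := by
    linear_combination P8 + P9 + P10 - hbef - (1/2) * hF1
  -- sin squares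
  have hA : Real.sin (6 * π / 13) ^ 2 = (1 - f) / 2 := by
    have h := Real.sin_sq_eq_half_sub (6 * π / 13)
    rw [show 2 * (6 * π / 13) = 12 * π / 13 by ring] at h
    rw [hf]; linarith
  have hB : Real.sin (2 * π / 13) ^ 2 = (1 - b) / 2 := by
    have h := Real.sin_sq_eq_half_sub (2 * π / 13)
    rw [show 2 * (2 * π / 13) = 4 * π / 13 by ring] at h
    rw [hb]; linarith
  have hC : Real.sin (5 * π / 13) ^ 2 = (1 - e) / 2 := by
    have h := Real.sin_sq_eq_half_sub (5 * π / 13)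
    rw [show 2 * (5 * π / 13) = 10 * π / 13 by ring] at h
    rw [he]; linarith
  have hDD : Real.sin (4 * π / 13) ^ 2 = (1 - d) / 2 := by
    have h := Real.sin_sq_eq_half_sub (4 * π / 13)
    rw [show 2 * (4 * π / 13) = 8 * π / 13 by ring] at h
    rw [hd]; linarith
  have hE : Real.sin (3 * π / 13) ^ 2 = (1 - c) / 2 := by
    have h := Real.sin_sq_eq_half_sub (3 * π / 13)
    rw [show 2 * (3 * π / 13) = 6 * π / 13 by ring] at h
    rw [hc]; linarith
  have hFF : Real.sin (π / 13) ^ 2 = (1 - a) / 2 := by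
    have h := Real.sin_sq_eq_half_sub (π / 13)
    rw [show 2 * (π / 13) = 2 * π / 13 by ring] at h
    rw [ha]; linarith
  -- s > 0
  have ha2 : 1/2 < a := by
    have h := Real.cos_lt_cos_of_nonneg_of_le_pi (x := 2 * π / 13) (y := π / 3)
      (by positivity) (by linarith) (by linarith)
    rw [Real.cos_pi_div_three] at h
    rw [ha]; exact h
  have hc2 : 0 < c := by
    rw [hc]
    exact Real.cos_pos_of_mem_Ioo ⟨by linarith, by linarith⟩
  have hd2 : -(1/2) < d := by
    have h := Real.cos_lt_cos_of_nonneg_of_le_pi (x := 8 * π / 13) (y := 2 * π / 3)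
      (by positivity) (by linarith) (by linarith)
    have hv : Real.cos (2 * π / 3) = -(1/2) := by
      rw [show 2 * π / 3 = π - π / 3 by ring, Real.cos_pi_sub, Real.cos_pi_div_three]
    rw [hv] at h
    rw [hd]; exact h
  have hspos : 0 < a + c + d := by linarith
  have hsqrt : Real.sqrt 13 = 4 * (a + c + d) + 1 := by
    rw [show (13:ℝ) = (4 * (a + c + d) + 1) ^ 2 by linear_combination -16 * hs2]
    exact Real.sqrt_sq (by linarith)
  -- assemble
  have hDpos : 0 < Real.sin (4 * π / 13) * Real.sin (3 * π / 13) * Real.sin (π / 13) := by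
    positivity
  rw [div_eq_iff (ne_of_gt hDpos)]
  have eN : (Real.sin (6 * π / 13) * Real.sin (2 * π / 13) * Real.sin (5 * π / 13)) ^ 2
      = (8 + 6 * (a + c + d)) / 64 := by
    rw [mul_pow, mul_pow, hA, hB, hC]
    linear_combination (1/8) * hN3
  have eD : (Real.sin (4 * π / 13) * Real.sin (3 * π / 13) * Real.sin (π / 13)) ^ 2
      = (5 - 6 * (a + c + d)) / 64 := by
    rw [mul_pow, mul_pow, hDD, hE, hFF]
    linear_combination (1/8) * hD3
  have hNpos : 0 < Real.sin (6 * π / 13) * Real.sin (2 * π / 13) * Real.sin (5 * π / 13) := by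
    positivity
  have hMpos : 0 < (3 + Real.sqrt 13) / 2
      * (Real.sin (4 * π / 13) * Real.sin (3 * π / 13) * Real.sin (π / 13)) := by
    have := Real.sqrt_nonneg 13
    positivity
  have hsq : (Real.sin (6 * π / 13) * Real.sin (2 * π / 13) * Real.sin (5 * π / 13)) ^ 2
      = ((3 + Real.sqrt 13) / 2
        * (Real.sin (4 * π / 13) * Real.sin (3 * π / 13) * Real.sin (π / 13))) ^ 2 := by
    rw [hsqrt]
    linear_combination eN - ((3 + (4 * (a + c + d) + 1)) / 2) ^ 2 * eD
      + ((3 * (a + c + d) + 2) / 8) * hs2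
  have h0 : (Real.sin (6 * π / 13) * Real.sin (2 * π / 13) * Real.sin (5 * π / 13)
      - (3 + Real.sqrt 13) / 2
        * (Real.sin (4 * π / 13) * Real.sin (3 * π / 13) * Real.sin (π / 13)))
      * (Real.sin (6 * π / 13) * Real.sin (2 * π / 13) * Real.sin (5 * π / 13)
      + (3 + Real.sqrt 13) / 2
        * (Real.sin (4 * π / 13) * Real.sin (3 * π / 13) * Real.sin (π / 13))) = 0 := by
    linear_combination hsq
  rcases mul_eq_zero.mp h0 with h | h
  · linarith
  · linarith
end

section
/- Let P = sin(6π/13)sin(2π/13)sin(5π/13)/(sin(4π/13)sin(3π/13)sin(π/13)). Then P - 1/P = 3. -/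
open Real

set_option maxHeartbeats 4000000 in
theorem stmt_16
    (P : ℝ)
    (hP : P = Real.sin (6 * π / 13) * Real.sin (2 * π / 13) * Real.sin (5 * π / 13) /
      (Real.sin (4 * π / 13) * Real.sin (3 * π / 13) * Real.sin (π / 13))) :
    P - 1 / P = 3 := by
  have hpi : (0:ℝ) < π := Real.pi_pos
  set t : ℝ := π / 13 with ht
  set s : ℝ := Real.sin t with hs
  set c : ℝ := Real.cos t with hc
  have hpy : s^2 + c^2 = 1 := Real.sin_sq_add_cos_sq t
  have hspos : 0 < s := by
    apply Real.sin_pos_of_pos_of_lt_pi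
    · rw [ht]; positivity
    · rw [ht]; linarith
  have pos : ∀ k : ℝ, 1 ≤ k → k ≤ 6 → 0 < Real.sin (k*t) := by
    intro k h1 h6
    apply Real.sin_pos_of_pos_of_lt_pi
    · rw [ht]; nlinarith
    · rw [ht]; nlinarith
  have p1 : 0 < s := hspos
  have p2 : 0 < Real.sin (2*t) := pos 2 (by norm_num) (by norm_num)
  have p3 : 0 < Real.sin (3*t) := pos 3 (by norm_num) (by norm_num)
  have p4 : 0 < Real.sin (4*t) := pos 4 (by norm_num) (by norm_num)
  have p5 : 0 < Real.sin (5*t) := pos 5 (by norm_num) (by norm_num)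
  have p6 : 0 < Real.sin (6*t) := pos 6 (by norm_num) (by norm_num)
  have mono : ∀ x y : ℝ, 0 ≤ x → x < y → y ≤ π/2 → Real.sin x < Real.sin y := by
    intro x y hx hxy hy
    exact Real.sin_lt_sin_of_lt_of_le_pi_div_two (by linarith) hy hxy
  have m64 : Real.sin (4*t) < Real.sin (6*t) := by
    apply mono <;> rw [ht] <;> [positivity; nlinarith; nlinarith]
  have m53 : Real.sin (3*t) < Real.sin (5*t) := by
    apply mono <;> rw [ht] <;> [positivity; nlinarith; nlinarith]
  have m21 : Real.sin t < Real.sin (2*t) := by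
    have h := mono t (2*t) (by rw [ht]; positivity) (by rw [ht]; nlinarith) (by rw [ht]; nlinarith)
    exact h
  set N : ℝ := Real.sin (6*t) * Real.sin (2*t) * Real.sin (5*t) with hN
  set D : ℝ := Real.sin (4*t) * Real.sin (3*t) * Real.sin t with hD
  have hDpos : 0 < D := by rw [hD]; positivity
  have hNpos : 0 < N := by rw [hN]; positivity
  have hND : D < N := by
    have hh1 : Real.sin (4*t) * Real.sin (3*t) < Real.sin (6*t) * Real.sin (5*t) :=
      mul_lt_mul'' m64 m53 (le_of_lt p4) (le_of_lt p3)
    have hh2 : Real.sin (4*t) * Real.sin (3*t) * Real.sin t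
        < Real.sin (6*t) * Real.sin (5*t) * Real.sin (2*t) :=
      mul_lt_mul'' hh1 m21 (by positivity) (le_of_lt p1)
    rw [hN, hD, show Real.sin (6*t) * Real.sin (2*t) * Real.sin (5*t)
      = Real.sin (6*t) * Real.sin (5*t) * Real.sin (2*t) by ring]
    exact hh2
  have hP' : P = N / D := by
    rw [hP, hN, hD, show (6:ℝ) * π / 13 = 6*t by rw [ht]; ring,
      show (2:ℝ) * π / 13 = 2*t by rw [ht]; ring,
      show (5:ℝ) * π / 13 = 5*t by rw [ht]; ring,
      show (4:ℝ) * π / 13 = 4*t by rw [ht]; ring,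
      show (3:ℝ) * π / 13 = 3*t by rw [ht]; ring]
  have hPpos : 0 < P := by rw [hP']; positivity
  have hY : 0 < N^2 - D^2 + 3*(N*D) := by nlinarith [hND, hNpos, hDpos]
  have hD0 : D ≠ 0 := ne_of_gt hDpos
  have hN0 : N ≠ 0 := ne_of_gt hNpos
  suffices hX : N^2 - D^2 - 3*(N*D) = 0 by
    rw [hP']
    field_simp
    linear_combination hX

  have S2 : Real.sin (2*t) = s * (2*c) := by
    rw [show (2:ℝ)*t = t + t by ring, Real.sin_add]; ring
  have C2 : Real.cos (2*t) = ((-1) + 2*c^2) := by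
    rw [show (2:ℝ)*t = t + t by ring, Real.cos_add]; linear_combination (-1 : ℝ) * hpy
  have S3 : Real.sin (3*t) = s * ((-1) + 4*c^2) := by
    rw [show (3:ℝ)*t = 2*t + t by ring, Real.sin_add, S2, C2]; ring
  have C3 : Real.cos (3*t) = ((-3)*c + 4*c^3) := by
    rw [show (3:ℝ)*t = 2*t + t by ring, Real.cos_add, S2, C2]; linear_combination (-(((2*c)):ℝ)) * hpy
  have S4 : Real.sin (4*t) = s * ((-4)*c + 8*c^3) := by
    rw [show (4:ℝ)*t = 3*t + t by ring, Real.sin_add, S3, C3]; ring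
  have C4 : Real.cos (4*t) = (1 + (-8)*c^2 + 8*c^4) := by
    rw [show (4:ℝ)*t = 3*t + t by ring, Real.cos_add, S3, C3]; linear_combination (-((((-1) + 4*c^2)):ℝ)) * hpy
  have S5 : Real.sin (5*t) = s * (1 + (-12)*c^2 + 16*c^4) := by
    rw [show (5:ℝ)*t = 4*t + t by ring, Real.sin_add, S4, C4]; ring
  have C5 : Real.cos (5*t) = (5*c + (-20)*c^3 + 16*c^5) := by
    rw [show (5:ℝ)*t = 4*t + t by ring, Real.cos_add, S4, C4]; linear_combination (-((((-4)*c + 8*c^3)):ℝ)) * hpy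
  have S6 : Real.sin (6*t) = s * (6*c + (-32)*c^3 + 32*c^5) := by
    rw [show (6:ℝ)*t = 5*t + t by ring, Real.sin_add, S5, C5]; ring
  have C6 : Real.cos (6*t) = ((-1) + 18*c^2 + (-48)*c^4 + 32*c^6) := by
    rw [show (6:ℝ)*t = 5*t + t by ring, Real.cos_add, S5, C5]; linear_combination (-(((1 + (-12)*c^2 + 16*c^4)):ℝ)) * hpy
  have S7 : Real.sin (7*t) = s * ((-1) + 24*c^2 + (-80)*c^4 + 64*c^6) := by
    rw [show (7:ℝ)*t = 6*t + t by ring, Real.sin_add, S6, C6]; ring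
  have C7 : Real.cos (7*t) = ((-7)*c + 56*c^3 + (-112)*c^5 + 64*c^7) := by
    rw [show (7:ℝ)*t = 6*t + t by ring, Real.cos_add, S6, C6]; linear_combination (-(((6*c + (-32)*c^3 + 32*c^5)):ℝ)) * hpy
  have S8 : Real.sin (8*t) = s * ((-8)*c + 80*c^3 + (-192)*c^5 + 128*c^7) := by
    rw [show (8:ℝ)*t = 7*t + t by ring, Real.sin_add, S7, C7]; ring
  have C8 : Real.cos (8*t) = (1 + (-32)*c^2 + 160*c^4 + (-256)*c^6 + 128*c^8) := by
    rw [show (8:ℝ)*t = 7*t + t by ring, Real.cos_add, S7, C7]; linear_combination (-((((-1) + 24*c^2 + (-80)*c^4 + 64*c^6)):ℝ)) * hpy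
  have S9 : Real.sin (9*t) = s * (1 + (-40)*c^2 + 240*c^4 + (-448)*c^6 + 256*c^8) := by
    rw [show (9:ℝ)*t = 8*t + t by ring, Real.sin_add, S8, C8]; ring
  have C9 : Real.cos (9*t) = (9*c + (-120)*c^3 + 432*c^5 + (-576)*c^7 + 256*c^9) := by
    rw [show (9:ℝ)*t = 8*t + t by ring, Real.cos_add, S8, C8]; linear_combination (-((((-8)*c + 80*c^3 + (-192)*c^5 + 128*c^7)):ℝ)) * hpy
  have S10 : Real.sin (10*t) = s * (10*c + (-160)*c^3 + 672*c^5 + (-1024)*c^7 + 512*c^9) := by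
    rw [show (10:ℝ)*t = 9*t + t by ring, Real.sin_add, S9, C9]; ring
  have C10 : Real.cos (10*t) = ((-1) + 50*c^2 + (-400)*c^4 + 1120*c^6 + (-1280)*c^8 + 512*c^10) := by
    rw [show (10:ℝ)*t = 9*t + t by ring, Real.cos_add, S9, C9]; linear_combination (-(((1 + (-40)*c^2 + 240*c^4 + (-448)*c^6 + 256*c^8)):ℝ)) * hpy
  have S11 : Real.sin (11*t) = s * ((-1) + 60*c^2 + (-560)*c^4 + 1792*c^6 + (-2304)*c^8 + 1024*c^10) := by
    rw [show (11:ℝ)*t = 10*t + t by ring, Real.sin_add, S10, C10]; ring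
  have C11 : Real.cos (11*t) = ((-11)*c + 220*c^3 + (-1232)*c^5 + 2816*c^7 + (-2816)*c^9 + 1024*c^11) := by
    rw [show (11:ℝ)*t = 10*t + t by ring, Real.cos_add, S10, C10]; linear_combination (-(((10*c + (-160)*c^3 + 672*c^5 + (-1024)*c^7 + 512*c^9)):ℝ)) * hpy
  have S12 : Real.sin (12*t) = s * ((-12)*c + 280*c^3 + (-1792)*c^5 + 4608*c^7 + (-5120)*c^9 + 2048*c^11) := by
    rw [show (12:ℝ)*t = 11*t + t by ring, Real.sin_add, S11, C11]; ring
  have C12 : Real.cos (12*t) = (1 + (-72)*c^2 + 840*c^4 + (-3584)*c^6 + 6912*c^8 + (-6144)*c^10 + 2048*c^12) := by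
    rw [show (12:ℝ)*t = 11*t + t by ring, Real.cos_add, S11, C11]; linear_combination (-((((-1) + 60*c^2 + (-560)*c^4 + 1792*c^6 + (-2304)*c^8 + 1024*c^10)):ℝ)) * hpy
  have S13 : Real.sin (13*t) = s * (1 + (-84)*c^2 + 1120*c^4 + (-5376)*c^6 + 11520*c^8 + (-11264)*c^10 + 4096*c^12) := by
    rw [show (13:ℝ)*t = 12*t + t by ring, Real.sin_add, S12, C12]; ring
  have C13 : Real.cos (13*t) = (13*c + (-364)*c^3 + 2912*c^5 + (-9984)*c^7 + 16640*c^9 + (-13312)*c^11 + 4096*c^13) := by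
    rw [show (13:ℝ)*t = 12*t + t by ring, Real.cos_add, S12, C12]; linear_combination (-((((-12)*c + 280*c^3 + (-1792)*c^5 + 4608*c^7 + (-5120)*c^9 + 2048*c^11)):ℝ)) * hpy
  have h13 : Real.sin (13*t) = 0 := by
    rw [show (13:ℝ)*t = π by rw [ht]; ring]; exact Real.sin_pi
  have hV : (1 + (-84)*c^2 + 1120*c^4 + (-5376)*c^6 + 11520*c^8 + (-11264)*c^10 + 4096*c^12) = 0 := by
    have h0 : s * (1 + (-84)*c^2 + 1120*c^4 + (-5376)*c^6 + 11520*c^8 + (-11264)*c^10 + 4096*c^12) = 0 := by rw [← S13]; exact h13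
    rcases mul_eq_zero.mp h0 with h | h
    · exact absurd h (ne_of_gt hspos)
    · exact h
  have key : (N^2 - D^2 - 3*(N*D)) * (N^2 - D^2 + 3*(N*D)) = 0 := by
    rw [hN, hD, S6, S2, S5, S4, S3]
    linear_combination (s^12 * (256*c^4 + (-9984)*c^6 + 141568*c^8 + (-1157120)*c^10 + 7335936*c^12 + (-41598976)*c^14 + 193396736*c^16 + (-650379264)*c^18 + 1486880768*c^20 + (-2235564032)*c^22 + 2113929216*c^24 + (-1140850688)*c^26 + 268435456*c^28)) * hV
  rcases mul_eq_zero.mp key with h | h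
  · exact h
  · exact absurd h (ne_of_gt hY)
end
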